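/- arXiv:1209.6089 — 5 statements merged into one kernel-verified Lean document; each statement's English description precedes it below -/
import Mathlib

section
/- Let f : ℝ → ℝ be 2π-periodic and essentially bounded, and set f_n(t) = f(nt) for n ∈ ℕ. Then f_n converges weak-* in L^∞(ℝ) to the constant (1/2π)∫_0^{2π} f(t) dt; that is, for every g ∈ L^1(ℝ), ∫_ℝ f(nt) g(t) dt → ((1/2π)∫_0^{2π} f(s) ds) · ∫_ℝ g(t) dt as n → ∞. -/
open MeasureTheory Filter Topology ENNReal

open scoped NNReal

section AuxiliaryLemmas

lemma aux_null_preimage {a : ℝ} (ha : a ≠ 0) {N : Set ℝ} (hN : volume N = 0) :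
    volume ((fun t => a * t) ⁻¹' N) = 0 := by
  obtain ⟨N', hNN', hN'm, hN'0⟩ := exists_measurable_superset_of_null hN
  refine measure_mono_null (Set.preimage_mono hNN') ?_
  rw [← Measure.map_apply (measurable_const_mul a) hN'm, Real.map_volume_mul_left ha]
  simp [hN'0]

lemma aux_ae_scale {a : ℝ} (ha : a ≠ 0) {p : ℝ → Prop} (hp : ∀ᵐ t : ℝ, p t) :
    ∀ᵐ t : ℝ, p (a * t) := by
  rw [ae_iff] at hp ⊢
  exact aux_null_preimage ha hp

lemma aux_ii {f : ℝ → ℝ} (hf : MemLp f ⊤ (volume : Measure ℝ)) (a b : ℝ) :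
    IntervalIntegrable f volume a b := by
  rw [intervalIntegrable_iff]
  have h1 : MemLp f ⊤ (volume.restrict (Set.Ioc (min a b) (max a b))) := hf.restrict _
  haveI : IsFiniteMeasure (volume.restrict (Set.Ioc (min a b) (max a b))) := by
    constructor
    rw [Measure.restrict_apply_univ]
    exact measure_Ioc_lt_top
  exact memLp_one_iff_integrable.mp (h1.mono_exponent le_top)

lemma aux_primitive_bdd {h : ℝ → ℝ} {T : ℝ} (hper : Function.Periodic h T) (hT : 0 < T)
    (hint : ∀ a b, IntervalIntegrable h volume a b) (hzero : (∫ x in (0:ℝ)..T, h x) = 0) :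
    ∃ C : ℝ, ∀ t : ℝ, |∫ x in (0:ℝ)..t, h x| ≤ C := by
  refine ⟨max |sInf ((fun t => ∫ x in (0:ℝ)..t, h x) '' Set.Icc 0 T)|
    |sSup ((fun t => ∫ x in (0:ℝ)..t, h x) '' Set.Icc 0 T)|, fun t => ?_⟩
  have h1 := hper.sInf_add_zsmul_le_integral_of_pos (hint 0 T) hT t
  have h2 := hper.integral_le_sSup_add_zsmul_of_pos (hint 0 T) hT t
  rw [hzero] at h1 h2
  simp only [smul_zero, add_zero] at h1 h2
  rw [abs_le]
  constructor
  · exact le_trans (neg_le_neg (le_max_left _ _)) (le_trans (neg_abs_le _) h1)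
  · exact le_trans h2 (le_trans (le_abs_self _) (le_max_right _ _))

lemma aux_interval {f : ℝ → ℝ} (hper : Function.Periodic f (2 * Real.pi))
    (hf : MemLp f ⊤ (volume : Measure ℝ)) :
    ∃ C : ℝ, 0 ≤ C ∧ ∀ (n : ℝ), n ≠ 0 → ∀ a b : ℝ,
      |(∫ t in a..b, f (n * t)) -
        ((2 * Real.pi)⁻¹ * ∫ x in (0:ℝ)..(2 * Real.pi), f x) * (b - a)| ≤ 2 * C / |n| := by
  set T : ℝ := 2 * Real.pi with hT_def
  have hT : 0 < T := by positivity
  set M : ℝ := T⁻¹ * ∫ x in (0:ℝ)..T, f x with hM_def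
  set h : ℝ → ℝ := fun x => f x - M with hh_def
  have hper_h : Function.Periodic h T := by intro x; simp [hh_def, hper x]
  have hint_h : ∀ a b, IntervalIntegrable h volume a b :=
    fun a b => (aux_ii hf a b).sub intervalIntegrable_const
  have hzero : (∫ x in (0:ℝ)..T, h x) = 0 := by
    rw [intervalIntegral.integral_sub (aux_ii hf 0 T) intervalIntegrable_const]
    rw [intervalIntegral.integral_const]
    rw [hM_def]
    field_simp
    rw [sub_zero, smul_eq_mul, ← mul_div_assoc, mul_div_cancel_left₀ _ hT.ne', sub_self]
  obtain ⟨C, hC⟩ := aux_primitive_bdd hper_h hT hint_h hzero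
  have hC0 : 0 ≤ C := le_trans (abs_nonneg _) (hC 0)
  refine ⟨C, hC0, fun n hn a b => ?_⟩
  set F : ℝ → ℝ := fun t => ∫ x in (0:ℝ)..t, h x with hF_def
  have key : (∫ t in a..b, f (n * t)) - M * (b - a) = n⁻¹ * (F (n * b) - F (n * a)) := by
    rw [intervalIntegral.integral_comp_mul_left _ hn]
    have h1 : (∫ x in n * a..n * b, f x) = (∫ x in n * a..n * b, h x) + M * (n * b - n * a) := by
      have : (∫ x in n * a..n * b, h x)
          = (∫ x in n * a..n * b, f x) - (∫ x in n * a..n * b, (fun _ => M) x) := by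
        rw [← intervalIntegral.integral_sub (aux_ii hf _ _) intervalIntegrable_const]
      rw [intervalIntegral.integral_const] at this
      rw [this]; ring_nf
    have h2 : (∫ x in n * a..n * b, h x) = F (n * b) - F (n * a) := by
      rw [hF_def]
      simp only []
      rw [← intervalIntegral.integral_interval_sub_left (hint_h 0 (n*b)) (hint_h 0 (n*a))]
    rw [h1, h2, smul_eq_mul]
    field_simp
    ring
  have hb : |F (n * b) - F (n * a)| ≤ 2 * C := by
    calc |F (n * b) - F (n * a)| ≤ |F (n * b)| + |F (n * a)| := abs_sub _ _
      _ ≤ C + C := add_le_add (hC _) (hC _)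
      _ = 2 * C := by ring
  rw [key, abs_mul, abs_inv]
  rw [inv_mul_eq_div, div_le_div_iff₀ (abs_pos.mpr hn) (abs_pos.mpr hn)]
  exact mul_le_mul_of_nonneg_right hb (abs_nonneg n)

lemma aux_essbd {f : ℝ → ℝ} (hf : MemLp f ⊤ (volume : Measure ℝ)) :
    ∃ Cf : ℝ, 0 ≤ Cf ∧ ∀ᵐ t : ℝ, |f t| ≤ Cf := by
  refine ⟨(eLpNorm f ⊤ (volume : Measure ℝ)).toReal, ENNReal.toReal_nonneg, ?_⟩
  have h := ae_le_eLpNormEssSup (f := f) (μ := (volume : Measure ℝ))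
  filter_upwards [h] with t ht
  have h2 : eLpNorm f ⊤ (volume : Measure ℝ) = eLpNormEssSup f volume := eLpNorm_exponent_top
  have h3 : (‖f t‖₊ : ℝ≥0∞).toReal ≤ (eLpNormEssSup f volume).toReal := by
    apply ENNReal.toReal_mono _ ht
    rw [← h2]; exact hf.2.ne
  simpa [← Real.norm_eq_abs, h2] using h3

lemma aux_c1_case {f : ℝ → ℝ} (hper : Function.Periodic f (2 * Real.pi))
    (hf : MemLp f ⊤ (volume : Measure ℝ))
    {g : ℝ → ℝ} (hg : ContDiff ℝ 1 g) (hgs : HasCompactSupport g) :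
    Tendsto (fun n : ℕ => ∫ t : ℝ, f (n * t) * g t) atTop
      (𝓝 (((2 * Real.pi)⁻¹ * ∫ x in (0:ℝ)..(2 * Real.pi), f x) * ∫ t : ℝ, g t)) := by
  obtain ⟨C, hC0, hCkey⟩ := aux_interval hper hf
  obtain ⟨Cf, hCf0, hCf⟩ := aux_essbd hf
  set M : ℝ := (2 * Real.pi)⁻¹ * ∫ x in (0:ℝ)..(2 * Real.pi), f x with hM_def
  -- support radius
  obtain ⟨r, hr⟩ : ∃ r : ℝ, tsupport g ⊆ Set.Icc (-r) r := by
    obtain ⟨r, hr⟩ := hgs.isBounded.subset_closedBall 0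
    exact ⟨r, by rwa [Real.closedBall_eq_Icc, zero_sub, zero_add] at hr⟩
  set R : ℝ := |r| + 1 with hR_def
  have hR0 : 0 < R := by positivity
  have hsupp : tsupport g ⊆ Set.Ioo (-R) R := by
    refine hr.trans fun x hx => ?_
    simp only [Set.mem_Icc] at hx
    have h1 : r ≤ |r| := le_abs_self r
    have h2 : -|r| ≤ -r := neg_le_neg h1
    constructor <;> [skip; skip] <;> simp only [hR_def] <;> nlinarith [neg_abs_le r, hx.1, hx.2]
  have hg0 : ∀ t, t ∉ Set.Ioo (-R) R → g t = 0 :=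
    fun t ht => image_eq_zero_of_notMem_tsupport (fun h => ht (hsupp h))
  -- derivative
  set d : ℝ → ℝ := deriv g with hd_def
  have hd : Continuous d := hg.continuous_deriv le_rfl
  have hgc : Continuous g := hg.continuous
  have hgdiff : ∀ x : ℝ, HasDerivAt g (d x) x :=
    fun x => ((hg.differentiable one_ne_zero) x).hasDerivAt
  obtain ⟨D, hD0, hD⟩ : ∃ D : ℝ, 0 ≤ D ∧ ∀ x, |d x| ≤ D := by
    obtain ⟨D, hD⟩ := (hgs.deriv).isCompact.exists_bound_of_continuousOn hd.continuousOn
    refine ⟨max D 0, le_max_right _ _, fun x => ?_⟩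
    by_cases hx : x ∈ tsupport (deriv g)
    · exact le_trans (hD x hx) (le_max_left _ _)
    · rw [hd_def, image_eq_zero_of_notMem_tsupport hx]; simp
  -- FTC for g
  have hftc : ∀ t : ℝ, -R ≤ t → g t = ∫ s in (-R)..t, d s := by
    intro t ht
    have h1 := intervalIntegral.integral_deriv_eq_sub (f := g) (a := -R) (b := t)
      (fun x _ => ((hg.differentiable one_ne_zero) x)) (hd.intervalIntegrable _ _)
    rw [h1, hg0 (-R) (by simp [hR0.le]), sub_zero]
  -- the restricted measure
  set S : Set ℝ := Set.Ioc (-R) R with hS_def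
  have hSm : MeasurableSet S := measurableSet_Ioc
  set μ : Measure ℝ := volume.restrict S with hμ_def
  haveI : IsFiniteMeasure μ := by
    constructor
    rw [hμ_def, Measure.restrict_apply_univ]
    exact measure_Ioc_lt_top
  -- measurable representative
  set f' : ℝ → ℝ := hf.1.mk f with hf'_def
  have hf'sm : StronglyMeasurable f' := hf.1.stronglyMeasurable_mk
  have hff' : f =ᵐ[volume] f' := hf.1.ae_eq_mk
  -- interval integrability of scaled f
  have hii : ∀ (ν : ℝ), ν ≠ 0 → ∀ a b : ℝ, IntervalIntegrable (fun t => f (ν * t)) volume a b := by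
    intro ν hν a b
    have h1 := (aux_ii hf (ν * a) (ν * b)).comp_mul_left (c := ν)
    rwa [mul_div_cancel_left₀ _ hν, mul_div_cancel_left₀ _ hν] at h1
  -- the key per-n estimate
  have key : ∀ n : ℕ, 1 ≤ n →
      |(∫ t : ℝ, f (n * t) * g t) - M * ∫ t : ℝ, g t| ≤ 2 * R * (D * (2 * C)) / n := by
    intro n hn
    set ν : ℝ := (n : ℝ) with hν_def
    have hν1 : (1:ℝ) ≤ ν := by rw [hν_def]; exact_mod_cast hn
    have hν0 : (0:ℝ) < ν := by linarith
    have hν : ν ≠ 0 := ne_of_gt hν0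
    -- ae facts for scaled f
    have hscale_eq : ∀ᵐ t : ℝ, f (ν * t) = f' (ν * t) := aux_ae_scale hν hff'
    have hscale_bd : ∀ᵐ t : ℝ, |f (ν * t)| ≤ Cf := aux_ae_scale hν hCf
    have hfsm_n : AEStronglyMeasurable (fun t => f (ν * t)) volume :=
      ((hf'sm.comp_measurable (measurable_const_mul ν)).aestronglyMeasurable).congr
        (hscale_eq.mono fun t ht => ht.symm)
    -- Fubini kernel
    set Φ : ℝ → ℝ → ℝ := fun t s => if s ≤ t then f (ν * t) * d s else 0 with hΦ_def
    have hprodnull : ∀ {N : Set ℝ}, MeasurableSet N → volume N = 0 →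
        (μ.prod μ) (N ×ˢ (Set.univ : Set ℝ)) = 0 := by
      intro N hNm hN0
      rw [Measure.prod_prod]
      have hμN : μ N = 0 := by
        rw [hμ_def, Measure.restrict_apply hNm]
        exact measure_mono_null Set.inter_subset_left hN0
      simp [hμN]
    have intΦ : Integrable (Function.uncurry Φ) (μ.prod μ) := by
      set Ψ : ℝ × ℝ → ℝ := fun p => if p.2 ≤ p.1 then f' (ν * p.1) * d p.2 else 0 with hΨ_def
      have hΨ : StronglyMeasurable Ψ := by
        apply StronglyMeasurable.ite (measurableSet_le measurable_snd measurable_fst)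
        · exact (hf'sm.comp_measurable ((measurable_const_mul ν).comp measurable_fst)).mul
            (hd.stronglyMeasurable.comp_measurable measurable_snd)
        · exact stronglyMeasurable_const
      obtain ⟨N, hNsub, hNm, hN0⟩ :=
        exists_measurable_superset_of_null (ae_iff.mp hscale_eq)
      have hae : Function.uncurry Φ =ᵐ[μ.prod μ] Ψ := by
        rw [Filter.EventuallyEq, ae_iff]
        refine measure_mono_null (fun p hp => ?_) (hprodnull hNm hN0)
        simp only [Set.mem_setOf_eq] at hp
        refine Set.mem_prod.mpr ⟨?_, Set.mem_univ _⟩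
        by_contra hp1
        apply hp
        have : ¬ (f (ν * p.1) ≠ f' (ν * p.1)) := fun hne => hp1 (hNsub hne)
        push_neg at this
        simp only [Function.uncurry, hΦ_def, hΨ_def, this]
      obtain ⟨N₂, hN₂sub, hN₂m, hN₂0⟩ :=
        exists_measurable_superset_of_null (ae_iff.mp hscale_bd)
      have hbdp : ∀ᵐ p ∂(μ.prod μ), ‖Function.uncurry Φ p‖ ≤ Cf * D := by
        rw [ae_iff]
        refine measure_mono_null (fun p hp => ?_) (hprodnull hN₂m hN₂0)
        simp only [Set.mem_setOf_eq] at hp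
        refine Set.mem_prod.mpr ⟨?_, Set.mem_univ _⟩
        by_contra hp1
        apply hp
        have hb : |f (ν * p.1)| ≤ Cf := by
          by_contra hb'
          exact hp1 (hN₂sub hb')
        simp only [Function.uncurry, hΦ_def]
        split_ifs
        · rw [Real.norm_eq_abs, abs_mul]
          exact mul_le_mul hb (hD _) (abs_nonneg _) hCf0
        · simp [mul_nonneg hCf0 hD0]
      exact Integrable.mono' (integrable_const (Cf * D))
        (hΨ.aestronglyMeasurable.congr hae.symm) hbdp
    have eq1 : (∫ t : ℝ, f (ν * t) * g t) = ∫ t, f (ν * t) * g t ∂μ := by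
      refine (setIntegral_eq_integral_of_forall_compl_eq_zero fun t ht => ?_).symm
      rw [hg0 t (fun h => ht (Set.Ioo_subset_Ioc_self h)), mul_zero]
    have eq2 : (∫ t, f (ν * t) * g t ∂μ) = ∫ t, (∫ s, Φ t s ∂μ) ∂μ := by
      rw [hμ_def]
      refine setIntegral_congr_fun hSm fun t ht => ?_
      have ht1 : -R < t := ht.1
      have ht2 : t ≤ R := ht.2
      have h1 : (fun s => Φ t s) = fun s => f (ν * t) * Set.indicator (Set.Iic t) d s := by
        funext s
        simp only [hΦ_def, Set.indicator_apply, Set.mem_Iic]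
        split_ifs <;> ring
      have hinner : (∫ s, Φ t s ∂μ) = f (ν * t) * g t := by
        rw [h1, integral_const_mul]
        congr 1
        rw [hμ_def, integral_indicator measurableSet_Iic,
          Measure.restrict_restrict measurableSet_Iic]
        have h2 : Set.Iic t ∩ S = Set.Ioc (-R) t := by
          rw [hS_def]
          ext x
          simp only [Set.mem_inter_iff, Set.mem_Iic, Set.mem_Ioc]
          constructor
          · rintro ⟨ha, hb, _⟩; exact ⟨hb, ha⟩
          · rintro ⟨ha, hb⟩; exact ⟨hb, ha, hb.trans ht2⟩
        rw [h2, ← intervalIntegral.integral_of_le ht1.le, ← hftc t ht1.le]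
      exact hinner.symm
    have eq3 : (∫ t, (∫ s, Φ t s ∂μ) ∂μ) = ∫ s, (∫ t, Φ t s ∂μ) ∂μ :=
      integral_integral_swap intΦ
    have eq4 : (∫ s, (∫ t, Φ t s ∂μ) ∂μ) = ∫ s, d s * ∫ t in s..R, f (ν * t) ∂volume ∂μ := by
      rw [hμ_def]
      refine setIntegral_congr_fun hSm fun s hs => ?_
      have hs1 : -R < s := hs.1
      have hs2 : s ≤ R := hs.2
      have h1 : (fun t => Φ t s) = fun t =>
          d s * Set.indicator (Set.Ici s) (fun t => f (ν * t)) t := by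
        funext t
        simp only [hΦ_def, Set.indicator_apply, Set.mem_Ici]
        split_ifs <;> ring
      rw [h1, integral_const_mul]
      congr 1
      rw [integral_indicator measurableSet_Ici,
        Measure.restrict_restrict measurableSet_Ici]
      have h2 : Set.Ici s ∩ S = Set.Icc s R := by
        rw [hS_def]
        ext x
        simp only [Set.mem_inter_iff, Set.mem_Ici, Set.mem_Ioc, Set.mem_Icc]
        constructor
        · rintro ⟨ha, _, hb⟩; exact ⟨ha, hb⟩
        · rintro ⟨ha, hb⟩; exact ⟨ha, lt_of_lt_of_le hs1 ha, hb⟩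
      rw [h2, integral_Icc_eq_integral_Ioc, ← intervalIntegral.integral_of_le hs2]
    have eq5 : M * (∫ t : ℝ, g t) = ∫ s, d s * (M * (R - s)) ∂μ := by
      have hgR : g R = 0 := hg0 R (by simp)
      have hgmR : g (-R) = 0 := hg0 (-R) (by simp [hR0])
      have hparts := intervalIntegral.integral_deriv_mul_eq_sub
        (u := g) (v := fun s => M * (R - s)) (u' := d) (v' := fun _ => -M)
        (a := -R) (b := R)
        (fun x _ => hgdiff x)
        (fun x _ => by
          have hv : HasDerivAt (fun s : ℝ => M * (R - s)) (M * (0 - 1)) x :=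
            (((hasDerivAt_const x R).sub (hasDerivAt_id x))).const_mul M
          simpa using hv)
        (hd.intervalIntegrable _ _)
        intervalIntegrable_const
      rw [hgR, hgmR] at hparts
      simp only [zero_mul, sub_zero] at hparts
      have hsplit : (∫ x in (-R : ℝ)..R, (d x * (M * (R - x)) + g x * (-M)))
          = (∫ x in (-R:ℝ)..R, d x * (M * (R - x))) + ∫ x in (-R:ℝ)..R, g x * (-M) := by
        apply intervalIntegral.integral_add
        · exact ((hd.mul (continuous_const.mul
            (continuous_const.sub continuous_id))).intervalIntegrable _ _)
        · exact ((hgc.mul continuous_const).intervalIntegrable _ _)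
      rw [hsplit] at hparts
      have h3 : (∫ x in (-R:ℝ)..R, g x * (-M)) = (∫ x in (-R:ℝ)..R, g x) * (-M) :=
        intervalIntegral.integral_mul_const _ _
      have hgint_eq : (∫ x in (-R:ℝ)..R, g x) = ∫ t : ℝ, g t := by
        rw [intervalIntegral.integral_of_le (by linarith : (-R:ℝ) ≤ R)]
        exact setIntegral_eq_integral_of_forall_compl_eq_zero
          fun t ht => hg0 t (fun h => ht (Set.Ioo_subset_Ioc_self h))
      have h4 : (∫ s, d s * (M * (R - s)) ∂μ) = ∫ x in (-R:ℝ)..R, d x * (M * (R - x)) := by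
        rw [intervalIntegral.integral_of_le (by linarith : (-R:ℝ) ≤ R), hμ_def, hS_def]
      rw [h4]
      rw [h3, hgint_eq] at hparts
      linarith
    have est : ∀ s : ℝ, |(∫ t in s..R, f (ν * t)) - M * (R - s)| ≤ 2 * C / ν := by
      intro s
      have := hCkey ν hν s R
      rwa [abs_of_pos hν0] at this
    -- integrability of the two integrands over μ
    have hcont_prim : Continuous fun s => ∫ t in s..R, f (ν * t) := by
      have h1 : (fun s => ∫ t in s..R, f (ν * t)) = fun s => -∫ t in R..s, f (ν * t) := by
        funext s; rw [← intervalIntegral.integral_symm]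
      rw [h1]
      exact (intervalIntegral.continuous_primitive (fun a b => hii ν hν a b) R).neg
    have I1 : Integrable (fun s => d s * ∫ t in s..R, f (ν * t)) μ :=
      (hd.mul hcont_prim).integrableOn_Ioc
    have I2 : Integrable (fun s => d s * (M * (R - s))) μ :=
      (hd.mul (continuous_const.mul (continuous_const.sub continuous_id))).integrableOn_Ioc
    rw [eq1, eq2, eq3, eq4, eq5, ← integral_sub I1 I2]
    have hbd : ∀ s : ℝ,
        ‖d s * (∫ t in s..R, f (ν * t)) - d s * (M * (R - s))‖ ≤ D * (2 * C / ν) := by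
      intro s
      rw [← mul_sub, Real.norm_eq_abs, abs_mul]
      exact mul_le_mul (hD s) (est s) (abs_nonneg _) hD0
    rw [← Real.norm_eq_abs]
    calc ‖∫ s, (d s * (∫ t in s..R, f (ν * t)) - d s * (M * (R - s))) ∂μ‖
        ≤ ∫ s, D * (2 * C / ν) ∂μ := by
          refine norm_integral_le_of_norm_le (integrable_const _) ?_
          exact Eventually.of_forall hbd
      _ = (μ Set.univ).toReal * (D * (2 * C / ν)) := by rw [integral_const, smul_eq_mul, measureReal_def]
      _ ≤ 2 * R * (D * (2 * C)) / ν := by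
          rw [hμ_def, Measure.restrict_apply_univ, hS_def, Real.volume_Ioc,
            ENNReal.toReal_ofReal (by linarith)]
          rw [div_eq_mul_inv, div_eq_mul_inv]
          have : R - -R = 2 * R := by ring
          rw [this]
          nlinarith [inv_nonneg.mpr hν0.le, mul_nonneg (mul_nonneg hD0 (by linarith : (0:ℝ) ≤ 2 * C)) (inv_nonneg.mpr hν0.le)]
  -- conclude
  have h0 : Tendsto (fun n : ℕ => (∫ t : ℝ, f (n * t) * g t) - M * ∫ t : ℝ, g t)
      atTop (𝓝 0) := by
    refine squeeze_zero_norm' ?_ (tendsto_const_div_atTop_nhds_zero_nat (2 * R * (D * (2 * C))))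
    filter_upwards [eventually_ge_atTop 1] with n hn
    exact key n hn
  have h1 := h0.add_const (M * ∫ t : ℝ, g t)
  simpa using h1

lemma aux_steklov {φ : ℝ → ℝ} (hφ : Continuous φ) (hφs : HasCompactSupport φ)
    {ε : ℝ} (hε : 0 < ε) :
    ∃ ψ : ℝ → ℝ, ContDiff ℝ 1 ψ ∧ HasCompactSupport ψ ∧ (∫ t : ℝ, |φ t - ψ t|) ≤ ε := by
  obtain ⟨r, hr⟩ : ∃ r : ℝ, 0 ≤ r ∧ tsupport φ ⊆ Set.Icc (-r) r := by
    obtain ⟨r₀, hr₀⟩ := hφs.isBounded.subset_closedBall 0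
    rw [Real.closedBall_eq_Icc, zero_sub, zero_add] at hr₀
    refine ⟨|r₀|, abs_nonneg _, hr₀.trans ?_⟩
    apply Set.Icc_subset_Icc (neg_le_neg (le_abs_self _)) (le_abs_self _)
  obtain ⟨hr0, hrsupp⟩ := hr
  have hφ0 : ∀ t, t ∉ Set.Icc (-r) r → φ t = 0 :=
    fun t ht => image_eq_zero_of_notMem_tsupport (fun h => ht (hrsupp h))
  set ε' : ℝ := ε / (2 * r + 4) with hε'_def
  have hε'0 : 0 < ε' := by positivity
  have hu : UniformContinuous φ :=
    hφ.uniformContinuous_of_tendsto_cocompact hφs.is_zero_at_infty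
  obtain ⟨δ, hδ0, hδ⟩ := Metric.uniformContinuous_iff.mp hu ε' hε'0
  set δ₀ : ℝ := min (δ / 2) 1 with hδ₀_def
  have hδ₀0 : 0 < δ₀ := lt_min (by linarith) one_pos
  have hδ₀1 : δ₀ ≤ 1 := min_le_right _ _
  have hδ₀δ : δ₀ < δ := lt_of_le_of_lt (min_le_left _ _) (by linarith)
  set Φp : ℝ → ℝ := fun x => ∫ u in (0:ℝ)..x, φ u with hΦp_def
  have hΦd : ∀ x : ℝ, HasDerivAt Φp (φ x) x := fun x =>
    intervalIntegral.integral_hasDerivAt_right (hφ.intervalIntegrable _ _)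
      hφ.stronglyMeasurable.stronglyMeasurableAtFilter hφ.continuousAt
  set ψ : ℝ → ℝ := fun t => δ₀⁻¹ * (Φp (t + δ₀) - Φp t) with hψ_def
  have hψd : ∀ t : ℝ, HasDerivAt ψ (δ₀⁻¹ * (φ (t + δ₀) - φ t)) t := by
    intro t
    have h1 : HasDerivAt (fun t : ℝ => Φp (t + δ₀)) (φ (t + δ₀)) t := by
      have := (hΦd (t + δ₀)).comp t ((hasDerivAt_id t).add_const δ₀)
      simpa [Function.comp_def] using this
    exact ((h1.sub (hΦd t)).const_mul δ₀⁻¹)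
  have hψc : Continuous ψ := by
    have := fun t => (hψd t).differentiableAt
    exact (Differentiable.continuous fun t => this t)
  have hψ_eq : ∀ t : ℝ, ψ t = δ₀⁻¹ * ∫ u in t..t + δ₀, φ u := by
    intro t
    have h := intervalIntegral.integral_interval_sub_left
      (hφ.intervalIntegrable (μ := volume) 0 (t + δ₀)) (hφ.intervalIntegrable (μ := volume) 0 t)
    simp only [hψ_def]
    rw [h]
  have hψsm : ContDiff ℝ 1 ψ := by
    rw [contDiff_one_iff_deriv]
    constructor
    · exact fun t => (hψd t).differentiableAt
    · have hder : deriv ψ = fun t => δ₀⁻¹ * (φ (t + δ₀) - φ t) :=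
        funext fun t => (hψd t).deriv
      rw [hder]
      exact continuous_const.mul ((hφ.comp (continuous_id.add continuous_const)).sub hφ)
  have hψ0 : ∀ t, t ∉ Set.Icc (-r - 1) r → ψ t = 0 := by
    intro t ht
    rw [hψ_eq t]
    have hzero : ∀ u ∈ Set.uIcc t (t + δ₀), φ u = 0 := by
      intro u hu'
      rw [Set.uIcc_of_le (by linarith : t ≤ t + δ₀)] at hu'
      apply hφ0
      intro hmem
      simp only [Set.mem_Icc] at ht hmem ⊢
      rcases not_and_or.mp ht with h | h
      · push_neg at h
        have : u ≤ t + δ₀ := hu'.2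
        nlinarith [hmem.1]
      · push_neg at h
        exact absurd hmem.2 (not_le.mpr (lt_of_lt_of_le h hu'.1))
    rw [intervalIntegral.integral_congr (g := fun _ => (0:ℝ)) hzero]
    simp
  have hψcs : HasCompactSupport ψ :=
    HasCompactSupport.intro isCompact_Icc hψ0
  -- pointwise estimate
  have hpt : ∀ t : ℝ, |φ t - ψ t| ≤ ε' := by
    intro t
    have h1 : φ t - ψ t = δ₀⁻¹ * ∫ u in t..t + δ₀, (φ t - φ u) := by
      rw [intervalIntegral.integral_sub intervalIntegrable_const (hφ.intervalIntegrable _ _),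
        intervalIntegral.integral_const, hψ_eq t]
      have : (t + δ₀ - t) • φ t = δ₀ * φ t := by rw [smul_eq_mul]; ring_nf
      rw [this, mul_sub]
      rw [inv_mul_cancel_left₀ (ne_of_gt hδ₀0)]
    have h2 : ‖∫ u in t..t + δ₀, (φ t - φ u)‖ ≤ ε' * |t + δ₀ - t| := by
      apply intervalIntegral.norm_integral_le_of_norm_le_const
      intro u hu'
      rw [Set.uIoc_of_le (by linarith : t ≤ t + δ₀)] at hu'
      have hd : dist (φ t) (φ u) < ε' := by
        apply hδ
        rw [Real.dist_eq]
        have := hu'.1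
        have := hu'.2
        rw [abs_lt]
        constructor <;> nlinarith
      rw [Real.norm_eq_abs, ← Real.dist_eq]
      exact hd.le
    rw [h1, abs_mul, abs_inv, abs_of_pos hδ₀0]
    have h3 : |t + δ₀ - t| = δ₀ := by rw [abs_of_pos (by linarith)]; ring_nf
    rw [h3] at h2
    calc δ₀⁻¹ * |∫ u in t..t + δ₀, (φ t - φ u)| ≤ δ₀⁻¹ * (ε' * δ₀) := by
          apply mul_le_mul_of_nonneg_left _ (inv_nonneg.mpr hδ₀0.le)
          rw [← Real.norm_eq_abs]; exact h2
      _ = ε' := by field_simp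
  -- L¹ estimate
  refine ⟨ψ, hψsm, hψcs, ?_⟩
  set B : Set ℝ := Set.Icc (-r - 2) (r + 2) with hB_def
  have hzero_out : ∀ t, t ∉ B → φ t - ψ t = 0 := by
    intro t ht
    simp only [hB_def, Set.mem_Icc, not_and_or] at ht
    have hφt : φ t = 0 := by
      apply hφ0; simp only [Set.mem_Icc, not_and_or]
      rcases ht with h | h <;> push_neg at h <;> [left; right] <;> push_neg <;> linarith
    have hψt : ψ t = 0 := by
      apply hψ0; simp only [Set.mem_Icc, not_and_or]
      rcases ht with h | h <;> push_neg at h <;> [left; right] <;> push_neg <;> linarith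
    rw [hφt, hψt, sub_zero]
  have heq : (∫ t : ℝ, |φ t - ψ t|) = ∫ t in B, |φ t - ψ t| := by
    refine (setIntegral_eq_integral_of_forall_compl_eq_zero fun t ht => ?_).symm
    rw [hzero_out t ht, abs_zero]
  rw [heq]
  have hint : IntegrableOn (fun t => |φ t - ψ t|) B volume :=
    ((hφ.sub hψc).abs).integrableOn_Icc
  calc (∫ t in B, |φ t - ψ t|) ≤ ∫ t in B, ε' := by
        apply setIntegral_mono_on hint ((integrableOn_const_iff).mpr (Or.inr ?_)) measurableSet_Icc
          fun t _ => hpt t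
        rw [hB_def, Real.volume_Icc]
        exact ENNReal.ofReal_lt_top
    _ = (volume B).toReal * ε' := by rw [setIntegral_const, smul_eq_mul, measureReal_def]
    _ ≤ ε := by
        rw [hB_def, Real.volume_Icc, ENNReal.toReal_ofReal (by linarith)]
        rw [hε'_def, show r + 2 - (-r - 2) = 2 * r + 4 by ring]
        have hne : (2:ℝ) * r + 4 ≠ 0 := by linarith
        field_simp
        exact le_rfl

end AuxiliaryLemmas

/-- A `2π`-periodic, essentially bounded function `f`, rescaled as
`fₙ(t) = f(nt)`, converges weak-* in `L^∞(ℝ)` to its mean value `(1/2π)∫₀^{2π} f`: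
the pairings against every `L¹(ℝ)` function converge. -/
theorem periodic_rescale_weak_star_convergence_Linfty
    (f : ℝ → ℝ) (hper : ∀ t : ℝ, f (t + 2 * Real.pi) = f t)
    (hf : MemLp f ⊤ (volume : Measure ℝ)) :
    ∀ g : ℝ → ℝ, Integrable g (volume : Measure ℝ) →
      Tendsto (fun n : ℕ => ∫ t : ℝ, f (n * t) * g t) atTop
        (𝓝 (((1 / (2 * Real.pi)) * ∫ t in Set.Ioo 0 (2 * Real.pi), f t) *
            ∫ t : ℝ, g t)) := by
  intro g hgint
  have hperiodic : Function.Periodic f (2 * Real.pi) := hper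
  obtain ⟨Cf, hCf0, hCf⟩ := aux_essbd hf
  have hMeq : ((1 / (2 * Real.pi)) * ∫ t in Set.Ioo 0 (2 * Real.pi), f t)
      = (2 * Real.pi)⁻¹ * ∫ x in (0:ℝ)..(2 * Real.pi), f x := by
    rw [one_div, intervalIntegral.integral_of_le (by positivity : (0:ℝ) ≤ 2 * Real.pi),
      integral_Ioc_eq_integral_Ioo]
  rw [hMeq]
  set M : ℝ := (2 * Real.pi)⁻¹ * ∫ x in (0:ℝ)..(2 * Real.pi), f x with hM_def
  -- measurability of the scaled function
  set f' : ℝ → ℝ := hf.1.mk f with hf'_def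
  have hf'sm : StronglyMeasurable f' := hf.1.stronglyMeasurable_mk
  have hff' : f =ᵐ[volume] f' := hf.1.ae_eq_mk
  have hfsm_n : ∀ n : ℕ, 1 ≤ n → AEStronglyMeasurable (fun t => f (n * t)) volume := by
    intro n hn
    have hν : ((n:ℝ)) ≠ 0 := Nat.cast_ne_zero.mpr (by omega)
    exact ((hf'sm.comp_measurable (measurable_const_mul _)).aestronglyMeasurable).congr
      ((aux_ae_scale hν hff').mono fun t ht => ht.symm)
  have hpair : ∀ (n : ℕ), 1 ≤ n → ∀ (h : ℝ → ℝ), Integrable h volume →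
      Integrable (fun t => f (n * t) * h t) volume := by
    intro n hn h hh
    have hν : ((n:ℝ)) ≠ 0 := Nat.cast_ne_zero.mpr (by omega)
    refine Integrable.mono' (hh.norm.const_mul Cf) ((hfsm_n n hn).mul hh.1) ?_
    filter_upwards [aux_ae_scale hν hCf] with t ht
    rw [Real.norm_eq_abs, abs_mul]
    exact mul_le_mul_of_nonneg_right ht (abs_nonneg _)
  rw [Metric.tendsto_atTop]
  intro ε hε
  set ε₁ : ℝ := ε / (2 * Cf + 2 * |M| + 2) with hε₁_def
  have hε₁0 : 0 < ε₁ := by positivity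
  obtain ⟨φ, hφcs, hφl1, hφc, hφint⟩ := hgint.exists_hasCompactSupport_integral_sub_le hε₁0
  obtain ⟨ψ, hψsm, hψcs, hψl1⟩ := aux_steklov hφc hφcs hε₁0
  have hψc : Continuous ψ := hψsm.continuous
  have hψint : Integrable ψ volume := hψc.integrable_of_hasCompactSupport hψcs
  have htend := aux_c1_case hperiodic hf hψsm hψcs
  rw [Metric.tendsto_atTop] at htend
  obtain ⟨N, hN⟩ := htend ε₁ hε₁0
  refine ⟨max N 1, fun n hn => ?_⟩
  have hn1 : 1 ≤ n := le_trans (le_max_right _ _) hn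
  have hnN : N ≤ n := le_trans (le_max_left _ _) hn
  have hν : ((n:ℝ)) ≠ 0 := Nat.cast_ne_zero.mpr (by omega)
  -- L¹ distance between g and ψ
  have hgψ : (∫ t : ℝ, |g t - ψ t|) ≤ 2 * ε₁ := by
    have hint1 : Integrable (fun t => |g t - φ t|) volume := (hgint.sub hφint).abs
    have hint2 : Integrable (fun t => |φ t - ψ t|) volume := (hφint.sub hψint).abs
    calc (∫ t : ℝ, |g t - ψ t|) ≤ ∫ t : ℝ, (|g t - φ t| + |φ t - ψ t|) := by
          apply integral_mono ((hgint.sub hψint).abs) (hint1.add hint2)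
          intro t
          calc |g t - ψ t| = |(g t - φ t) + (φ t - ψ t)| := by ring_nf
            _ ≤ |g t - φ t| + |φ t - ψ t| := abs_add_le _ _
      _ = (∫ t : ℝ, |g t - φ t|) + ∫ t : ℝ, |φ t - ψ t| := integral_add hint1 hint2
      _ ≤ ε₁ + ε₁ := by
          refine add_le_add ?_ hψl1
          simpa [Real.norm_eq_abs] using hφl1
      _ = 2 * ε₁ := by ring
  -- term 1
  have ht1 : |(∫ t : ℝ, f (n * t) * g t) - ∫ t : ℝ, f (n * t) * ψ t| ≤ Cf * (2 * ε₁) := by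
    rw [← integral_sub (hpair n hn1 g hgint) (hpair n hn1 ψ hψint)]
    have hb : Integrable (fun t => Cf * |g t - ψ t|) volume :=
      ((hgint.sub hψint).abs).const_mul Cf
    have h1 : ‖∫ t : ℝ, (f (n * t) * g t - f (n * t) * ψ t)‖
        ≤ ∫ t : ℝ, Cf * |g t - ψ t| := by
      refine norm_integral_le_of_norm_le hb ?_
      filter_upwards [aux_ae_scale hν hCf] with t ht
      rw [← mul_sub, Real.norm_eq_abs, abs_mul]
      exact mul_le_mul_of_nonneg_right ht (abs_nonneg _)
    rw [Real.norm_eq_abs] at h1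
    refine h1.trans ?_
    rw [integral_const_mul]
    exact mul_le_mul_of_nonneg_left hgψ hCf0
  -- term 2
  have ht2 : dist (∫ t : ℝ, f (n * t) * ψ t) (M * ∫ t : ℝ, ψ t) < ε₁ := hN n hnN
  -- term 3
  have ht3 : |M * (∫ t : ℝ, ψ t) - M * ∫ t : ℝ, g t| ≤ |M| * (2 * ε₁) := by
    rw [← mul_sub, abs_mul]
    refine mul_le_mul_of_nonneg_left ?_ (abs_nonneg _)
    rw [← integral_sub hψint hgint]
    have h5 : |∫ t : ℝ, (ψ t - g t)| ≤ ∫ t : ℝ, |ψ t - g t| := by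
      simpa [Real.norm_eq_abs] using
        norm_integral_le_integral_norm (μ := (volume : Measure ℝ)) (fun t => ψ t - g t)
    refine h5.trans ?_
    have h6 : (∫ t : ℝ, |ψ t - g t|) = ∫ t : ℝ, |g t - ψ t| := by
      congr 1; funext t; rw [abs_sub_comm]
    rw [h6]; exact hgψ
  rw [Real.dist_eq]
  rw [Real.dist_eq] at ht2
  calc |(∫ t : ℝ, f (n * t) * g t) - M * ∫ t : ℝ, g t|
      ≤ |(∫ t : ℝ, f (n * t) * g t) - ∫ t : ℝ, f (n * t) * ψ t|
        + |(∫ t : ℝ, f (n * t) * ψ t) - M * ∫ t : ℝ, ψ t|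
        + |M * (∫ t : ℝ, ψ t) - M * ∫ t : ℝ, g t| := by
        have := abs_sub_le ((∫ t : ℝ, f (n * t) * g t)) (∫ t : ℝ, f (n * t) * ψ t)
          (M * ∫ t : ℝ, g t)
        have h2 := abs_sub_le ((∫ t : ℝ, f (n * t) * ψ t)) (M * ∫ t : ℝ, ψ t)
          (M * ∫ t : ℝ, g t)
        linarith
    _ < Cf * (2 * ε₁) + ε₁ + |M| * (2 * ε₁) := by
        have h0 : 0 ≤ |M| * (2 * ε₁) := by positivity
        linarith
    _ ≤ ε := by
        rw [hε₁_def]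
        rw [div_eq_mul_inv]
        have hpos : (0:ℝ) < 2 * Cf + 2 * |M| + 2 := by positivity
        have : Cf * (2 * (ε * (2 * Cf + 2 * |M| + 2)⁻¹)) + ε * (2 * Cf + 2 * |M| + 2)⁻¹
            + |M| * (2 * (ε * (2 * Cf + 2 * |M| + 2)⁻¹))
            = (2 * Cf + 1 + 2 * |M|) * (ε * (2 * Cf + 2 * |M| + 2)⁻¹) := by ring
        rw [this]
        calc (2 * Cf + 1 + 2 * |M|) * (ε * (2 * Cf + 2 * |M| + 2)⁻¹)
            ≤ (2 * Cf + 2 * |M| + 2) * (ε * (2 * Cf + 2 * |M| + 2)⁻¹) := by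
              have hx : 0 < ε * (2 * Cf + 2 * |M| + 2)⁻¹ := by positivity
              nlinarith
          _ = ε := by field_simp
end

section
/- Let f : ℝ → ℝ be continuous and 2π-periodic, let e ∈ C^∞(ℝ, ℝ), and let g : ℝ → ℝ be continuous. Then for every bounded interval (a,b) ⊂ ℝ, ∫_a^b g(e(t) f(nt)) dt → ∫_a^b (1/2π)∫_0^{2π} g(e(t) f(τ)) dτ dt as n → ∞. -/
open MeasureTheory Filter Topology intervalIntegral

/-- Reduction of a point to the fundamental period window. -/
lemma periodic_reduce {φ : ℝ → ℝ} {T : ℝ} (hT : 0 < T) (hp : Function.Periodic φ T) (x : ℝ) :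
    φ x = φ (T * Int.fract (x / T)) ∧ T * Int.fract (x / T) ∈ Set.Icc (0:ℝ) T := by
  constructor
  · have h1 : T * Int.fract (x / T) = x - (⌊x / T⌋ : ℤ) * T := by
      rw [Int.fract]
      field_simp
    rw [h1, hp.sub_int_mul_eq]
  · constructor
    · exact mul_nonneg hT.le (Int.fract_nonneg _)
    · nlinarith [Int.fract_lt_one (x / T), Int.fract_nonneg (x / T), hT]

/-- Averaging lemma for a single continuous periodic function. -/
lemma avg_lemma {φ : ℝ → ℝ} (hφ : Continuous φ) {T : ℝ} (hT : 0 < T)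
    (hp : Function.Periodic φ T) (a b : ℝ) :
    Tendsto (fun n : ℕ => ∫ t in a..b, φ (n * t)) atTop
      (𝓝 ((b - a) * ((1 / T) * ∫ τ in (0:ℝ)..T, φ τ))) := by
  set I : ℝ := ∫ τ in (0:ℝ)..T, φ τ with hI
  set ψ : ℝ → ℝ := fun x => (∫ u in (0:ℝ)..x, φ u) - x * (I / T) with hψdef
  have hint : ∀ a b : ℝ, IntervalIntegrable φ volume a b := fun a b =>
    hφ.intervalIntegrable a b
  have hψc : Continuous ψ :=
    (intervalIntegral.continuous_primitive hint 0).sub (continuous_id.mul continuous_const)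
  have hψper : Function.Periodic ψ T := by
    intro x
    have h1 : (∫ u in (0:ℝ)..(x + T), φ u) = (∫ u in (0:ℝ)..x, φ u) + ∫ u in x..(x+T), φ u :=
      (integral_add_adjacent_intervals (hint 0 x) (hint x (x+T))).symm
    have h2 : (∫ u in x..(x+T), φ u) = I := by
      rw [hp.intervalIntegral_add_eq x 0, zero_add]
    have hTne : T ≠ 0 := ne_of_gt hT
    simp only [hψdef, h1, h2]
    field_simp
    ring
  -- bound on ψ
  obtain ⟨C, hC⟩ := (isCompact_Icc (a := (0:ℝ)) (b := T)).exists_bound_of_continuousOn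
    hψc.continuousOn
  have hCb : ∀ x, |ψ x| ≤ C := by
    intro x
    obtain ⟨heq, hmem⟩ := periodic_reduce hT hψper x
    rw [heq]
    exact hC _ hmem
  have hC0 : 0 ≤ C := le_trans (abs_nonneg _) (hCb 0)
  -- the explicit formula for n ≥ 1
  have key : ∀ n : ℕ, 1 ≤ n →
      (∫ t in a..b, φ (n * t)) = (b - a) * (I / T) + (ψ (n * b) - ψ (n * a)) / n := by
    intro n hn
    have hn0 : (n:ℝ) ≠ 0 := Nat.cast_ne_zero.mpr (by omega)
    rw [intervalIntegral.integral_comp_mul_left φ hn0]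
    have h3 : (∫ x in (n:ℝ)*a..(n:ℝ)*b, φ x)
        = (∫ u in (0:ℝ)..((n:ℝ)*b), φ u) - ∫ u in (0:ℝ)..((n:ℝ)*a), φ u := by
      rw [integral_interval_sub_left (hint 0 _) (hint 0 _)]
    have h4 : ∀ x : ℝ, (∫ u in (0:ℝ)..x, φ u) = ψ x + x * (I / T) := by
      intro x; simp [hψdef]
    rw [h3, h4, h4]
    have hTne : T ≠ 0 := ne_of_gt hT
    simp only [smul_eq_mul]
    field_simp
    ring
  have hlim : Tendsto (fun n : ℕ => (b - a) * (I / T) + (ψ (n * b) - ψ (n * a)) / n)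
      atTop (𝓝 ((b - a) * ((1 / T) * I))) := by
    have h0 : Tendsto (fun n : ℕ => (ψ (n * b) - ψ (n * a)) / n) atTop (𝓝 0) := by
      refine squeeze_zero_norm (a := fun n : ℕ => (2 * C) / n) ?_
        (tendsto_const_div_atTop_nhds_zero_nat (2 * C))
      · intro n
        have habs : |ψ ((n:ℝ) * b) - ψ ((n:ℝ) * a)| ≤ 2 * C := by
          calc |ψ ((n:ℝ) * b) - ψ ((n:ℝ) * a)| ≤ |ψ ((n:ℝ)*b)| + |ψ ((n:ℝ)*a)| :=
                abs_sub _ _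
            _ ≤ C + C := add_le_add (hCb _) (hCb _)
            _ = 2 * C := by ring
        rw [Real.norm_eq_abs, abs_div, Nat.abs_cast]
        exact div_le_div_of_nonneg_right habs (Nat.cast_nonneg n)
    have := h0.const_add ((b - a) * (I / T))
    simpa [div_eq_mul_inv, mul_comm, mul_left_comm, mul_assoc] using this
  refine Tendsto.congr' ?_ hlim
  filter_upwards [eventually_ge_atTop 1] with n hn
  exact (key n hn).symm

/-- General two-scale averaging lemma. -/
lemma two_scale_main {H : ℝ → ℝ → ℝ} (hH : Continuous fun p : ℝ × ℝ => H p.1 p.2)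
    {T : ℝ} (hT : 0 < T) (hp : ∀ t, Function.Periodic (H t) T)
    {a b : ℝ} (hab : a ≤ b) :
    Tendsto (fun n : ℕ => ∫ t in a..b, H t ((n:ℝ) * t)) atTop
      (𝓝 (∫ t in a..b, (1 / T) * ∫ τ in (0:ℝ)..T, H t τ)) := by
  set avg : ℝ → ℝ := fun t => (1 / T) * ∫ τ in (0:ℝ)..T, H t τ with havg
  have hcont_frozen : ∀ c : ℝ, Continuous (H c) := fun c =>
    hH.comp (continuous_const.prodMk continuous_id)
  have hcont_n : ∀ n : ℕ, Continuous fun t => H t ((n:ℝ) * t) := fun n =>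
    hH.comp (continuous_id.prodMk (continuous_const.mul continuous_id))
  have havgc : Continuous avg := continuous_const.mul
    (intervalIntegral.continuous_parametric_intervalIntegral_of_continuous' (f := H)
      (μ := volume) hH 0 T)
  rw [Metric.tendsto_atTop]
  intro ε hε
  have hba0 : (0:ℝ) ≤ b - a := by linarith
  have hD : (0:ℝ) < 4 * (b - a) + 4 := by linarith
  set ε' : ℝ := ε / (4 * (b - a) + 4) with hε'def
  have hε' : 0 < ε' := div_pos hε hD
  -- uniform continuity
  have hK : IsCompact (Set.Icc a b ×ˢ Set.Icc (0:ℝ) T) := isCompact_Icc.prod isCompact_Icc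
  have hUC := hK.uniformContinuousOn_of_continuous hH.continuousOn
  rw [Metric.uniformContinuousOn_iff] at hUC
  obtain ⟨δ, hδ, hδ'⟩ := hUC ε' hε'
  have key : ∀ t ∈ Set.Icc a b, ∀ t' ∈ Set.Icc a b, |t - t'| < δ →
      ∀ s : ℝ, |H t s - H t' s| ≤ ε' := by
    intro t ht t' ht' hd s
    obtain ⟨he1, hmem⟩ := periodic_reduce hT (hp t) s
    have he2 := (periodic_reduce hT (hp t') s).1
    rw [he1, he2]
    have hd2 : dist ((t, T * Int.fract (s / T)) : ℝ × ℝ) (t', T * Int.fract (s / T)) < δ := by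
      rw [Prod.dist_eq]
      exact max_lt (by rwa [Real.dist_eq]) (by simpa using hδ)
    have := hδ' (t, T * Int.fract (s / T)) ⟨ht, hmem⟩ (t', T * Int.fract (s / T)) ⟨ht', hmem⟩ hd2
    rw [Real.dist_eq] at this
    exact this.le
  have key2 : ∀ t ∈ Set.Icc a b, ∀ t' ∈ Set.Icc a b, |t - t'| < δ →
      |avg t - avg t'| ≤ ε' := by
    intro t ht t' ht' hd
    have hsub : avg t - avg t' = (1 / T) * ∫ τ in (0:ℝ)..T, (H t τ - H t' τ) := by
      rw [intervalIntegral.integral_sub ((hcont_frozen t).intervalIntegrable _ _)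
        ((hcont_frozen t').intervalIntegrable _ _)]
      simp only [havg]
      ring
    have hb : ‖∫ τ in (0:ℝ)..T, (H t τ - H t' τ)‖ ≤ ε' * |T - 0| :=
      intervalIntegral.norm_integral_le_of_norm_le_const
        (fun x _ => by rw [Real.norm_eq_abs]; exact key t ht t' ht' hd x)
    rw [Real.norm_eq_abs, sub_zero, abs_of_pos hT] at hb
    rw [hsub, abs_mul, abs_of_nonneg (by positivity : (0:ℝ) ≤ 1 / T)]
    calc (1 / T) * |∫ τ in (0:ℝ)..T, (H t τ - H t' τ)|
        ≤ (1 / T) * (ε' * T) := by gcongr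
      _ = ε' := by field_simp
  -- partition
  set m : ℕ := ⌊(b - a) / δ⌋₊ + 1 with hmdef
  have hm0 : 0 < m := Nat.succ_pos _
  have hmR : (0:ℝ) < m := Nat.cast_pos.mpr hm0
  have hmesh : (b - a) / m < δ := by
    rw [div_lt_iff₀ hmR]
    have h1 : (b - a) / δ < m := by
      have := Nat.lt_floor_add_one ((b - a) / δ)
      rw [hmdef]; push_cast; linarith
    have := (div_lt_iff₀ hδ).mp h1
    linarith
  have hmesh0 : 0 ≤ (b - a) / m := div_nonneg hba0 hmR.le
  set P : ℕ → ℝ := fun i => a + i * ((b - a) / m) with hPdef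
  have hstep : ∀ i : ℕ, P (i + 1) - P i = (b - a) / m := by
    intro i; simp only [hPdef]; push_cast; ring
  have hPmono : ∀ i j : ℕ, i ≤ j → P i ≤ P j := by
    intro i j h
    simp only [hPdef, add_le_add_iff_left]
    exact mul_le_mul_of_nonneg_right (by exact_mod_cast h) hmesh0
  have hP0 : P 0 = a := by simp [hPdef]
  have hPm : P m = b := by
    simp only [hPdef]
    field_simp
    ring
  have hPmem : ∀ i ≤ m, P i ∈ Set.Icc a b := fun i hi =>
    ⟨by rw [← hP0]; exact hPmono 0 i (Nat.zero_le _),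
     by rw [← hPm]; exact hPmono i m hi⟩
  -- decompositions
  have hdecomp1 : ∀ n : ℕ, (∫ t in a..b, H t ((n:ℝ) * t))
      = ∑ i ∈ Finset.range m, ∫ t in P i..P (i + 1), H t ((n:ℝ) * t) := by
    intro n
    have := intervalIntegral.sum_integral_adjacent_intervals (a := P) (n := m) (μ := volume)
      (fun k _ => ((hcont_n n).intervalIntegrable _ _))
    rw [hP0, hPm] at this
    exact this.symm
  have hdecomp2 : (∫ t in a..b, avg t)
      = ∑ i ∈ Finset.range m, ∫ t in P i..P (i + 1), avg t := by
    have := intervalIntegral.sum_integral_adjacent_intervals (a := P) (n := m) (μ := volume)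
      (fun k _ => (havgc.intervalIntegrable _ _))
    rw [hP0, hPm] at this
    exact this.symm
  -- middle limits
  have hmid : ∀ i : ℕ, Tendsto (fun n : ℕ => ∫ τ in P i..P (i + 1), H (P i) ((n:ℝ) * τ))
      atTop (𝓝 ((P (i + 1) - P i) * avg (P i))) := fun i =>
    avg_lemma (hcont_frozen (P i)) hT (hp (P i)) _ _
  have hS : Tendsto (fun n : ℕ => ∑ i ∈ Finset.range m,
        ∫ τ in P i..P (i + 1), H (P i) ((n:ℝ) * τ)) atTop
      (𝓝 (∑ i ∈ Finset.range m, (P (i + 1) - P i) * avg (P i))) :=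
    tendsto_finset_sum _ fun i _ => hmid i
  rw [Metric.tendsto_atTop] at hS
  obtain ⟨N, hN⟩ := hS (ε / 2) (by positivity)
  refine ⟨N, fun n hn => ?_⟩
  have hNn := hN n hn
  rw [Real.dist_eq] at hNn ⊢
  rw [hdecomp1 n, hdecomp2]
  -- per-interval facts
  have hmem_t : ∀ i, i ∈ Finset.range m → ∀ t ∈ Set.uIoc (P i) (P (i + 1)),
      t ∈ Set.Icc a b ∧ |t - P i| < δ := by
    intro i hi t ht
    have him : i < m := Finset.mem_range.mp hi
    have h1 : P i ≤ P (i + 1) := hPmono i (i + 1) (Nat.le_succ i)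
    rw [Set.uIoc_of_le h1] at ht
    obtain ⟨ht1, ht2⟩ := ht
    have hPi := hPmem i him.le
    have hPi1 := hPmem (i + 1) him
    constructor
    · exact ⟨le_trans hPi.1 ht1.le, le_trans ht2 hPi1.2⟩
    · rw [abs_of_nonneg (by linarith)]
      calc t - P i ≤ P (i + 1) - P i := by linarith
        _ = (b - a) / m := hstep i
        _ < δ := hmesh
  have hboundA : ∀ i ∈ Finset.range m,
      |∫ t in P i..P (i + 1), (H t ((n:ℝ) * t) - H (P i) ((n:ℝ) * t))| ≤ ε' * ((b - a) / m) := by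
    intro i hi
    have him : i < m := Finset.mem_range.mp hi
    have hPi := hPmem i him.le
    have h := intervalIntegral.norm_integral_le_of_norm_le_const
      (C := ε') (f := fun t => H t ((n:ℝ) * t) - H (P i) ((n:ℝ) * t))
      (a := P i) (b := P (i + 1)) ?_
    · rw [Real.norm_eq_abs] at h
      calc |∫ t in P i..P (i + 1), (H t ((n:ℝ) * t) - H (P i) ((n:ℝ) * t))|
          ≤ ε' * |P (i + 1) - P i| := h
        _ = ε' * ((b - a) / m) := by rw [hstep i, abs_of_nonneg hmesh0]
    · intro t ht
      obtain ⟨htab, htδ⟩ := hmem_t i hi t ht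
      rw [Real.norm_eq_abs]
      exact key t htab (P i) hPi htδ _
  have hboundC : ∀ i ∈ Finset.range m,
      |∫ t in P i..P (i + 1), (avg (P i) - avg t)| ≤ ε' * ((b - a) / m) := by
    intro i hi
    have him : i < m := Finset.mem_range.mp hi
    have hPi := hPmem i him.le
    have h := intervalIntegral.norm_integral_le_of_norm_le_const
      (C := ε') (f := fun t => avg (P i) - avg t)
      (a := P i) (b := P (i + 1)) ?_
    · rw [Real.norm_eq_abs] at h
      calc |∫ t in P i..P (i + 1), (avg (P i) - avg t)|
          ≤ ε' * |P (i + 1) - P i| := h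
        _ = ε' * ((b - a) / m) := by rw [hstep i, abs_of_nonneg hmesh0]
    · intro t ht
      obtain ⟨htab, htδ⟩ := hmem_t i hi t ht
      rw [Real.norm_eq_abs]
      have : |P i - t| < δ := by rwa [abs_sub_comm]
      exact key2 (P i) hPi t htab this
  -- splitting each term
  have hsplit : ∀ i ∈ Finset.range m,
      (∫ t in P i..P (i + 1), H t ((n:ℝ) * t)) - (∫ t in P i..P (i + 1), avg t)
      = (∫ t in P i..P (i + 1), (H t ((n:ℝ) * t) - H (P i) ((n:ℝ) * t)))
        + ((∫ τ in P i..P (i + 1), H (P i) ((n:ℝ) * τ)) - (P (i + 1) - P i) * avg (P i))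
        + (∫ t in P i..P (i + 1), (avg (P i) - avg t)) := by
    intro i _
    have hcf : Continuous fun τ : ℝ => H (P i) ((n:ℝ) * τ) :=
      (hcont_frozen (P i)).comp (continuous_const.mul continuous_id)
    rw [intervalIntegral.integral_sub ((hcont_n n).intervalIntegrable _ _)
      (hcf.intervalIntegrable _ _),
      intervalIntegral.integral_sub (intervalIntegrable_const)
      (havgc.intervalIntegrable _ _)]
    rw [intervalIntegral.integral_const, smul_eq_mul]
    ring
  -- assemble
  calc |(∑ i ∈ Finset.range m, ∫ t in P i..P (i + 1), H t ((n:ℝ) * t))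
        - ∑ i ∈ Finset.range m, ∫ t in P i..P (i + 1), avg t|
      = |∑ i ∈ Finset.range m,
          ((∫ t in P i..P (i + 1), H t ((n:ℝ) * t)) - ∫ t in P i..P (i + 1), avg t)| := by
        rw [Finset.sum_sub_distrib]
    _ = |(∑ i ∈ Finset.range m, ∫ t in P i..P (i + 1), (H t ((n:ℝ) * t) - H (P i) ((n:ℝ) * t)))
          + ((∑ i ∈ Finset.range m, ∫ τ in P i..P (i + 1), H (P i) ((n:ℝ) * τ))
            - ∑ i ∈ Finset.range m, (P (i + 1) - P i) * avg (P i))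
          + ∑ i ∈ Finset.range m, ∫ t in P i..P (i + 1), (avg (P i) - avg t)| := by
        rw [Finset.sum_congr rfl hsplit, Finset.sum_add_distrib, Finset.sum_add_distrib,
          Finset.sum_sub_distrib]
    _ ≤ |∑ i ∈ Finset.range m, ∫ t in P i..P (i + 1), (H t ((n:ℝ) * t) - H (P i) ((n:ℝ) * t))|
          + |(∑ i ∈ Finset.range m, ∫ τ in P i..P (i + 1), H (P i) ((n:ℝ) * τ))
            - ∑ i ∈ Finset.range m, (P (i + 1) - P i) * avg (P i)|
          + |∑ i ∈ Finset.range m, ∫ t in P i..P (i + 1), (avg (P i) - avg t)| :=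
        (abs_add_le _ _).trans (add_le_add_left (abs_add_le _ _) _)
    _ ≤ (∑ i ∈ Finset.range m, |∫ t in P i..P (i + 1), (H t ((n:ℝ) * t) - H (P i) ((n:ℝ) * t))|)
          + (ε / 2)
          + ∑ i ∈ Finset.range m, |∫ t in P i..P (i + 1), (avg (P i) - avg t)| :=
        add_le_add (add_le_add (Finset.abs_sum_le_sum_abs _ _) hNn.le)
          (Finset.abs_sum_le_sum_abs _ _)
    _ ≤ (∑ _i ∈ Finset.range m, ε' * ((b - a) / m)) + (ε / 2)
          + ∑ _i ∈ Finset.range m, ε' * ((b - a) / m) :=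
        add_le_add (add_le_add_left (Finset.sum_le_sum hboundA) _)
          (Finset.sum_le_sum hboundC)
    _ = ε' * (b - a) + ε / 2 + ε' * (b - a) := by
        rw [Finset.sum_const, Finset.card_range, nsmul_eq_mul]
        have : (m:ℝ) * (ε' * ((b - a) / m)) = ε' * (b - a) := by field_simp
        rw [this]
    _ < ε := by
        have h1 : ε' * (b - a) < ε / 4 := by
          rw [hε'def, div_mul_eq_mul_div, div_lt_div_iff₀ hD (by norm_num : (0:ℝ) < 4)]
          nlinarith [hε, hba0]
        linarith

/-- Two-scale averaging for continuous functions: if `f` is continuous and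
`2π`-periodic, `e` is smooth and `g` is continuous, then for every bounded interval
`(a,b)`, `∫_a^b g(e(t) f(nt)) dt → ∫_a^b (1/2π)∫₀^{2π} g(e(t) f(τ)) dτ dt` as `n → ∞`. -/
theorem two_scale_averaging_continuous
    (f : ℝ → ℝ) (hfc : Continuous f) (hper : ∀ t : ℝ, f (t + 2 * Real.pi) = f t)
    (e : ℝ → ℝ) (he : ContDiff ℝ (⊤ : ℕ∞) e)
    (g : ℝ → ℝ) (hg : Continuous g) :
    ∀ a b : ℝ,
      Tendsto (fun n : ℕ => ∫ t in a..b, g (e t * f (n * t))) atTop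
        (𝓝 (∫ t in a..b, (1 / (2 * Real.pi)) * ∫ τ in (0:ℝ)..(2 * Real.pi), g (e t * f τ))) := by
  intro a b
  have hH : Continuous fun p : ℝ × ℝ => g (e p.1 * f p.2) :=
    hg.comp ((he.continuous.comp continuous_fst).mul (hfc.comp continuous_snd))
  have hp : ∀ t : ℝ, Function.Periodic (fun s => g (e t * f s)) (2 * Real.pi) := by
    intro t s
    simp [hper s]
  rcases le_total a b with hab | hab
  · exact two_scale_main (H := fun t s => g (e t * f s)) hH Real.two_pi_pos hp hab
  · have h := (two_scale_main (H := fun t s => g (e t * f s)) hH Real.two_pi_pos hp hab).neg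
    have h1 : ∀ n : ℕ, (∫ t in a..b, g (e t * f ((n:ℝ) * t)))
        = -∫ t in b..a, g (e t * f ((n:ℝ) * t)) := fun n =>
      intervalIntegral.integral_symm b a
    have h2 : (∫ t in a..b, (1 / (2 * Real.pi)) * ∫ τ in (0:ℝ)..(2 * Real.pi), g (e t * f τ))
        = -∫ t in b..a, (1 / (2 * Real.pi)) * ∫ τ in (0:ℝ)..(2 * Real.pi), g (e t * f τ) :=
      intervalIntegral.integral_symm b a
    rw [h2]
    exact h.congr fun n => (h1 n).symm
end

section
/- Let 1 < p < ∞, let f : ℝ → ℝ be continuous and 2π-periodic, let e ∈ C^∞(ℝ, ℝ), and let g : ℝ → ℝ be continuous. Define g_n(t) = g(e(t) f(nt)) and ⟨g⟩(t) = (1/2π)∫_0^{2π} g(e(t) f(τ)) dτ. Assume sup_n ‖g_n‖_{L^p(ℝ)} < ∞ and ⟨g⟩ ∈ L^p(ℝ). Then g_n converges weakly to ⟨g⟩ in L^p(ℝ), i.e. ∫_ℝ g_n(t) h(t) dt → ∫_ℝ ⟨g⟩(t) h(t) dt for every h ∈ L^{p'}(ℝ). -/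
open MeasureTheory Filter Topology ENNReal

section TwoScaleAux
open intervalIntegral

private lemma avg1 (F : ℝ → ℝ) (hF : Continuous F) (hper : Function.Periodic F (2 * Real.pi))
    (a b : ℝ) :
    Tendsto (fun n : ℕ => ∫ t in a..b, F (n * t)) atTop
      (𝓝 ((b - a) * ((2 * Real.pi)⁻¹ * ∫ τ in (0:ℝ)..(2 * Real.pi), F τ))) := by
  have hT : (2 * Real.pi) ≠ 0 := by positivity
  set I : ℝ := ∫ τ in (0:ℝ)..(2 * Real.pi), F τ with hI
  set m : ℝ := (2 * Real.pi)⁻¹ * I with hm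
  set Φ : ℝ → ℝ := fun x => (∫ u in (0:ℝ)..x, F u) - x * m with hΦ
  have hΦc : Continuous Φ := by
    apply Continuous.sub ?_ (by continuity)
    exact intervalIntegral.continuous_primitive (fun a b => hF.intervalIntegrable a b) 0
  have hΦper : Function.Periodic Φ (2 * Real.pi) := by
    intro x
    have h1 : (∫ u in (0:ℝ)..(x + 2 * Real.pi), F u) - (∫ u in (0:ℝ)..x, F u)
        = ∫ u in x..(x + 2 * Real.pi), F u :=
      intervalIntegral.integral_interval_sub_left (hF.intervalIntegrable _ _)
        (hF.intervalIntegrable _ _)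
    have h2 : (∫ u in x..(x + 2 * Real.pi), F u) = I := by
      simpa using hper.intervalIntegral_add_eq x 0
    have : (∫ u in (0:ℝ)..(x + 2 * Real.pi), F u) = (∫ u in (0:ℝ)..x, F u) + I := by
      linarith [h1, h2]
    simp only [hΦ, this, hm]
    field_simp
    ring
  obtain ⟨C, hC⟩ : ∃ C, ∀ x, |Φ x| ≤ C := by
    have := (hΦper.isBounded_of_continuous hT hΦc)
    rw [isBounded_iff_forall_norm_le] at this
    obtain ⟨C, hC⟩ := this
    exact ⟨C, fun x => hC _ ⟨x, rfl⟩⟩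
  have key : ∀ n : ℕ, 1 ≤ n →
      (∫ t in a..b, F (n * t)) = (b - a) * m + (Φ (n * b) - Φ (n * a)) / n := by
    intro n hn
    have hn0 : (n : ℝ) ≠ 0 := by positivity
    rw [intervalIntegral.integral_comp_mul_left F hn0]
    have h1 : (∫ x in (n * a : ℝ)..(n * b : ℝ), F x)
        = (∫ u in (0:ℝ)..(n * b : ℝ), F u) - (∫ u in (0:ℝ)..(n * a : ℝ), F u) :=
      (intervalIntegral.integral_interval_sub_left (hF.intervalIntegrable _ _)
        (hF.intervalIntegrable _ _)).symm
    have h2 : ∀ x : ℝ, (∫ u in (0:ℝ)..x, F u) = Φ x + x * m := by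
      intro x; simp [hΦ]
    rw [h1, h2, h2]
    field_simp
    linear_combination (Φ (n*b) - Φ (n*a) + n*b*m - n*m*a) * (mul_inv_cancel₀ hn0)
  rw [show (b - a) * ((2 * Real.pi)⁻¹ * I) = (b - a) * m from rfl]
  have : Tendsto (fun n : ℕ => (b - a) * m + (Φ (n * b) - Φ (n * a)) / n) atTop
      (𝓝 ((b - a) * m)) := by
    have h0 : Tendsto (fun n : ℕ => (Φ (n * b) - Φ (n * a)) / n) atTop (𝓝 0) := by
      apply squeeze_zero_norm (a := fun n : ℕ => (2 * C) / n)
      · intro n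
        rcases Nat.eq_zero_or_pos n with rfl | hn
        · simp
        · rw [Real.norm_eq_abs, abs_div, abs_of_nonneg (by positivity : (0:ℝ) ≤ (n:ℝ))]
          gcongr
          calc |Φ (n * b) - Φ (n * a)| ≤ |Φ (n * b)| + |Φ (n * a)| := abs_sub _ _
            _ ≤ 2 * C := by linarith [hC (n * b), hC (n * a)]
      · exact tendsto_const_nhds.div_atTop tendsto_natCast_atTop_atTop
    simpa using tendsto_const_nhds.add h0
  apply this.congr'
  filter_upwards [eventually_ge_atTop 1] with n hn
  exact (key n hn).symm

private lemma avg2 (R : ℝ) (hR : 0 < R) (K : ℝ → ℝ → ℝ)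
    (hK : Continuous (Function.uncurry K))
    (hKper : ∀ t, Function.Periodic (K t) (2 * Real.pi)) :
    Tendsto (fun n : ℕ => ∫ t in (-R)..R, K t (n * t)) atTop
      (𝓝 (∫ t in (-R)..R, (2 * Real.pi)⁻¹ * ∫ τ in (0:ℝ)..(2 * Real.pi), K t τ)) := by
  have hπ : (0:ℝ) < 2 * Real.pi := by positivity
  set m : ℝ → ℝ := fun t => (2 * Real.pi)⁻¹ * ∫ τ in (0:ℝ)..(2 * Real.pi), K t τ with hm
  have hKc : ∀ t, Continuous (K t) := fun t =>
    hK.comp (continuous_const.prodMk continuous_id)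
  have hKn : ∀ n : ℕ, Continuous (fun t => K t (n * t)) := fun n =>
    hK.comp (continuous_id.prodMk (by continuity))
  have hmc : Continuous m := by
    apply Continuous.mul continuous_const
    exact intervalIntegral.continuous_parametric_intervalIntegral_of_continuous' hK 0 (2 * Real.pi)
  rw [Metric.tendsto_atTop]
  intro ε hε
  set ε' : ℝ := ε / (4 * (2 * R + 1)) with hε'def
  have hε' : 0 < ε' := by positivity
  -- uniform continuity in the slow variable
  obtain ⟨δ, hδ, hUC⟩ : ∃ δ > 0, ∀ t ∈ Set.Icc (-R) R, ∀ t' ∈ Set.Icc (-R) R,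
      |t - t'| ≤ δ → ∀ s, |K t s - K t' s| ≤ ε' := by
    have hcomp : IsCompact ((Set.Icc (-R) R) ×ˢ (Set.Icc (0:ℝ) (2 * Real.pi))) :=
      (isCompact_Icc).prod isCompact_Icc
    have hUC0 := hcomp.uniformContinuousOn_of_continuous hK.continuousOn
    rw [Metric.uniformContinuousOn_iff] at hUC0
    obtain ⟨δ, hδ, H⟩ := hUC0 ε' hε'
    refine ⟨δ / 2, by positivity, fun t ht t' ht' htt' s => ?_⟩
    obtain ⟨s', hs'mem, hs'⟩ : ∃ s' ∈ Set.Icc (0:ℝ) (2 * Real.pi),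
        ∀ u, K u s = K u s' := by
      refine ⟨s - ⌊s / (2 * Real.pi)⌋ * (2 * Real.pi), ?_, fun u =>
        ((hKper u).sub_int_mul_eq ⌊s / (2 * Real.pi)⌋).symm⟩
      have h1 := Int.floor_le (s / (2 * Real.pi))
      have h2 := Int.lt_floor_add_one (s / (2 * Real.pi))
      have h3 : (⌊s / (2 * Real.pi)⌋ : ℝ) * (2 * Real.pi) ≤ s := by
        rw [← le_div_iff₀ hπ]; exact h1
      have h4 : s < ((⌊s / (2 * Real.pi)⌋ : ℝ) + 1) * (2 * Real.pi) := by
        rw [← div_lt_iff₀ hπ]; exact h2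
      constructor <;> nlinarith
    rw [hs' t, hs' t']
    have hd : dist (t, s') (t', s') < δ := by
      rw [Prod.dist_eq]
      apply max_lt
      · rw [Real.dist_eq]; linarith
      · simpa using hδ
    have := H (t, s') (Set.mk_mem_prod ht hs'mem) (t', s') (Set.mk_mem_prod ht' hs'mem) hd
    exact le_of_lt (by simpa [Function.uncurry, Real.dist_eq] using this)
  -- choose the partition
  obtain ⟨N₀, hN₀big⟩ := exists_nat_gt (2 * R / δ)
  have hN₀pos : 0 < N₀ := by
    by_contra hc
    push_neg at hc
    interval_cases N₀
    · simp at hN₀big; nlinarith [div_pos (by linarith : (0:ℝ) < 2 * R) hδ]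
  have hN₀R : (0:ℝ) < N₀ := by exact_mod_cast hN₀pos
  set Δ : ℝ := 2 * R / N₀ with hΔdef
  have hΔpos : 0 < Δ := by positivity
  have hΔδ : Δ ≤ δ := by
    rw [hΔdef, div_le_iff₀ hN₀R]
    rw [div_lt_iff₀ hδ] at hN₀big
    nlinarith
  set a : ℕ → ℝ := fun i => -R + i * Δ with ha
  have ha0 : a 0 = -R := by simp [ha]
  have haN : a N₀ = R := by
    simp only [ha, hΔdef]
    field_simp
    ring
  have hastep : ∀ i : ℕ, a (i + 1) - a i = Δ := by
    intro i; simp only [ha]; push_cast; ring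
  have hale : ∀ i : ℕ, a i ≤ a (i + 1) := fun i => by
    have := hastep i; linarith
  have hamem : ∀ i : ℕ, i ≤ N₀ → a i ∈ Set.Icc (-R) R := by
    intro i hi
    constructor
    · simp only [ha]; nlinarith [hΔpos, (by exact_mod_cast Nat.zero_le i : (0:ℝ) ≤ i)]
    · have : (i:ℝ) ≤ N₀ := by exact_mod_cast hi
      have : (i:ℝ) * Δ ≤ N₀ * Δ := by nlinarith
      have hNΔ : (N₀:ℝ) * Δ = 2 * R := by rw [hΔdef]; field_simp
      simp only [ha]; nlinarith
  have hpiece_sub : ∀ (i : ℕ), i < N₀ → ∀ x ∈ Set.uIoc (a i) (a (i + 1)),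
      x ∈ Set.Icc (-R) R ∧ |x - a i| ≤ δ := by
    intro i hi x hx
    rw [Set.uIoc_of_le (hale i)] at hx
    obtain ⟨hx1, hx2⟩ := hx
    have hai := hamem i (le_of_lt hi)
    have hai1 := hamem (i+1) hi
    have hst := hastep i
    refine ⟨⟨by linarith [hai.1], by linarith [hai1.2]⟩, ?_⟩
    rw [abs_le]; constructor <;> [linarith; linarith]
  -- the approximating sums
  set S1 : ℕ → ℝ := fun n => ∑ i ∈ Finset.range N₀, ∫ t in a i..a (i+1), K (a i) (n * t)
    with hS1
  set S : ℝ := ∑ i ∈ Finset.range N₀, (a (i+1) - a i) * m (a i) with hS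
  have hS1tendsto : Tendsto S1 atTop (𝓝 S) := by
    apply tendsto_finset_sum
    intro i _
    exact avg1 (K (a i)) (hKc _) (hKper _) (a i) (a (i+1))
  rw [Metric.tendsto_atTop] at hS1tendsto
  obtain ⟨N, hN⟩ := hS1tendsto (ε / 4) (by positivity)
  refine ⟨N, fun n hn => ?_⟩
  -- error bound A
  have hsplitn : (∫ t in (-R)..R, K t (n * t))
      = ∑ i ∈ Finset.range N₀, ∫ t in a i..a (i+1), K t (n * t) := by
    rw [intervalIntegral.sum_integral_adjacent_intervals
      (fun k _ => ((hKn n).intervalIntegrable _ _)), ha0, haN]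
  have hA : |(∫ t in (-R)..R, K t (n * t)) - S1 n| ≤ 2 * R * ε' := by
    rw [hsplitn, hS1, ← Finset.sum_sub_distrib]
    calc |∑ i ∈ Finset.range N₀, ((∫ t in a i..a (i+1), K t (n*t)) - ∫ t in a i..a (i+1), K (a i) (n*t))|
        ≤ ∑ i ∈ Finset.range N₀, |(∫ t in a i..a (i+1), K t (n*t)) - ∫ t in a i..a (i+1), K (a i) (n*t)| :=
          Finset.abs_sum_le_sum_abs _ _
      _ ≤ ∑ i ∈ Finset.range N₀, ε' * Δ := by
          apply Finset.sum_le_sum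
          intro i hi
          rw [Finset.mem_range] at hi
          rw [← intervalIntegral.integral_sub ((hKn n).intervalIntegrable _ _)
            ((by exact (hKc (a i)).comp (continuous_const.mul continuous_id) : Continuous fun t : ℝ => K (a i) ((n:ℝ) * t)).intervalIntegrable _ _)]
          have := intervalIntegral.norm_integral_le_of_norm_le_const
            (a := a i) (b := a (i+1)) (C := ε')
            (f := fun t => K t (n*t) - K (a i) (n*t)) ?_
          · rw [Real.norm_eq_abs] at this
            calc |_| ≤ ε' * |a (i+1) - a i| := this
              _ = ε' * Δ := by rw [hastep i, abs_of_pos hΔpos]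
          · intro x hx
            obtain ⟨hx1, hx2⟩ := hpiece_sub i hi x hx
            rw [Real.norm_eq_abs]
            exact hUC x hx1 (a i) (hamem i (le_of_lt hi)) hx2 _
      _ = 2 * R * ε' := by
          rw [Finset.sum_const, Finset.card_range, nsmul_eq_mul, hΔdef]
          field_simp
  -- error bound B
  have hmdiff : ∀ t ∈ Set.Icc (-R) R, ∀ t' ∈ Set.Icc (-R) R, |t - t'| ≤ δ →
      |m t - m t'| ≤ ε' := by
    intro t ht t' ht' htt'
    simp only [hm]
    rw [← mul_sub, ← intervalIntegral.integral_sub ((hKc t).intervalIntegrable _ _)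
      ((hKc t').intervalIntegrable _ _), abs_mul, abs_of_pos (by positivity : (0:ℝ) < (2*Real.pi)⁻¹)]
    have := intervalIntegral.norm_integral_le_of_norm_le_const
      (a := (0:ℝ)) (b := 2*Real.pi) (C := ε') (f := fun τ => K t τ - K t' τ)
      (fun x _ => by rw [Real.norm_eq_abs]; exact hUC t ht t' ht' htt' x)
    rw [Real.norm_eq_abs] at this
    calc (2*Real.pi)⁻¹ * |∫ τ in (0:ℝ)..(2*Real.pi), (K t τ - K t' τ)|
        ≤ (2*Real.pi)⁻¹ * (ε' * |2*Real.pi - 0|) := by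
          apply mul_le_mul_of_nonneg_left this (by positivity)
      _ = ε' := by rw [abs_of_pos (by linarith : (0:ℝ) < 2*Real.pi - 0)]; field_simp; ring
  have hsplitm : (∫ t in (-R)..R, m t)
      = ∑ i ∈ Finset.range N₀, ∫ t in a i..a (i+1), m t := by
    rw [intervalIntegral.sum_integral_adjacent_intervals
      (fun k _ => (hmc.intervalIntegrable _ _)), ha0, haN]
  have hB : |S - ∫ t in (-R)..R, m t| ≤ 2 * R * ε' := by
    rw [hsplitm, hS, ← Finset.sum_sub_distrib]
    calc |∑ i ∈ Finset.range N₀, ((a (i+1) - a i) * m (a i) - ∫ t in a i..a (i+1), m t)|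
        ≤ ∑ i ∈ Finset.range N₀, |(a (i+1) - a i) * m (a i) - ∫ t in a i..a (i+1), m t| :=
          Finset.abs_sum_le_sum_abs _ _
      _ ≤ ∑ i ∈ Finset.range N₀, ε' * Δ := by
          apply Finset.sum_le_sum
          intro i hi
          rw [Finset.mem_range] at hi
          have hconst : (a (i+1) - a i) * m (a i) = ∫ _ in a i..a (i+1), m (a i) := by
            rw [intervalIntegral.integral_const, smul_eq_mul]
          rw [hconst, ← intervalIntegral.integral_sub
            (intervalIntegrable_const) (hmc.intervalIntegrable _ _)]
          have := intervalIntegral.norm_integral_le_of_norm_le_const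
            (a := a i) (b := a (i+1)) (C := ε') (f := fun t => m (a i) - m t) ?_
          · rw [Real.norm_eq_abs] at this
            calc |_| ≤ ε' * |a (i+1) - a i| := this
              _ = ε' * Δ := by rw [hastep i, abs_of_pos hΔpos]
          · intro x hx
            obtain ⟨hx1, hx2⟩ := hpiece_sub i hi x hx
            rw [Real.norm_eq_abs, abs_sub_comm]
            exact hmdiff x hx1 (a i) (hamem i (le_of_lt hi)) hx2
      _ = 2 * R * ε' := by
          rw [Finset.sum_const, Finset.card_range, nsmul_eq_mul, hΔdef]
          field_simp
  -- conclusion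
  have hRε' : 2 * R * ε' < ε / 4 := by
    have h4 : ε' * (4 * (2 * R + 1)) = ε := by rw [hε'def]; field_simp
    nlinarith
  have hmid := hN n hn
  rw [Real.dist_eq] at hmid ⊢
  calc |(∫ t in (-R)..R, K t (n * t)) - ∫ t in (-R)..R, m t|
      ≤ |(∫ t in (-R)..R, K t (n * t)) - S1 n| + |S1 n - S| + |S - ∫ t in (-R)..R, m t| := by
        have := abs_sub_le (∫ t in (-R)..R, K t (n * t)) (S1 n) (∫ t in (-R)..R, m t)
        have := abs_sub_le (S1 n) S (∫ t in (-R)..R, m t)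
        linarith [abs_sub_le (∫ t in (-R)..R, K t (n * t)) (S1 n) (∫ t in (-R)..R, m t),
          abs_sub_le (S1 n) S (∫ t in (-R)..R, m t)]
    _ < ε := by linarith

private lemma holder_abs (P Q : ℝ≥0∞) (hPQ : 1/P + 1/Q = 1) (u v : ℝ → ℝ)
    (hu : MemLp u P volume) (hv : MemLp v Q volume) :
    Integrable (fun t => u t * v t) volume ∧
    |∫ t, u t * v t| ≤ (eLpNorm u P volume * eLpNorm v Q volume).toReal := by
  have hconj : (1 : ℝ≥0∞) / 1 = 1/P + 1/Q := by rw [hPQ]; simp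
  have h1 : MemLp (u • v) 1 volume := hv.smul hu (hpqr := ⟨by simpa [one_div] using hconj.symm⟩)
  have hint : Integrable (fun t => u t * v t) volume := by
    have := memLp_one_iff_integrable.mp h1
    exact this
  refine ⟨hint, ?_⟩
  have hb : eLpNorm (u • v) 1 volume ≤ eLpNorm u P volume * eLpNorm v Q volume :=
    eLpNorm_smul_le_mul_eLpNorm hv.1 hu.1 (hpqr := ⟨by simpa [one_div] using hconj.symm⟩)
  have hne : eLpNorm u P volume * eLpNorm v Q volume ≠ ⊤ :=
    (ENNReal.mul_lt_top hu.eLpNorm_lt_top hv.eLpNorm_lt_top).ne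
  calc |∫ t, u t * v t| ≤ ∫ t, ‖u t * v t‖ := by
        rw [← Real.norm_eq_abs]; exact norm_integral_le_integral_norm _
    _ = (eLpNorm (u • v) 1 volume).toReal := by
        rw [integral_norm_eq_lintegral_enorm hint.1, eLpNorm_one_eq_lintegral_enorm]
        rfl
    _ ≤ (eLpNorm u P volume * eLpNorm v Q volume).toReal := ENNReal.toReal_mono hne hb

end TwoScaleAux

/-- Two-scale weak convergence in `L^p(ℝ)` (`1 < p < ∞`): if `f` is
continuous `2π`-periodic, `e` smooth, `g` continuous, `gₙ(t) = g(e(t)f(nt))` uniformly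
bounded in `L^p(ℝ)` and `⟨g⟩(t) = (1/2π)∫₀^{2π} g(e(t)f(τ)) dτ` lies in `L^p(ℝ)`, then
`gₙ ⇀ ⟨g⟩` weakly in `L^p(ℝ)`. -/
theorem two_scale_weak_convergence_Lp
    (p q : ℝ) (hp : 1 < p) (hpq : 1 / p + 1 / q = 1)
    (f : ℝ → ℝ) (hfc : Continuous f) (hper : ∀ t : ℝ, f (t + 2 * Real.pi) = f t)
    (e : ℝ → ℝ) (he : ContDiff ℝ (⊤ : ℕ∞) e)
    (g : ℝ → ℝ) (hg : Continuous g)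
    (hbdd : ∃ M : ℝ, ∀ n : ℕ,
      eLpNorm (fun t : ℝ => g (e t * f (n * t))) (ENNReal.ofReal p) volume ≤ ENNReal.ofReal M)
    (havg : MemLp (fun t : ℝ => (1 / (2 * Real.pi)) * ∫ τ in Set.Ioo 0 (2 * Real.pi), g (e t * f τ))
      (ENNReal.ofReal p) (volume : Measure ℝ)) :
    ∀ h : ℝ → ℝ, MemLp h (ENNReal.ofReal q) (volume : Measure ℝ) →
      Tendsto (fun n : ℕ => ∫ t : ℝ, g (e t * f (n * t)) * h t) atTop
        (𝓝 (∫ t : ℝ,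
          ((1 / (2 * Real.pi)) * ∫ τ in Set.Ioo 0 (2 * Real.pi), g (e t * f τ)) * h t)) := by
  intro h hmemh
  have hπ : (0:ℝ) < 2 * Real.pi := by positivity
  have hp0 : 0 < p := lt_trans one_pos hp
  have h2 : 1/p < 1 := by rw [div_lt_one hp0]; exact hp
  have h1p : 0 < 1/p := by positivity
  have h1q : 0 < 1/q := by linarith
  have hq0 : 0 < q := one_div_pos.mp h1q
  have hq1 : 1 < q := (div_lt_one hq0).mp (by linarith)
  set P : ℝ≥0∞ := ENNReal.ofReal p with hPdef
  set Q : ℝ≥0∞ := ENNReal.ofReal q with hQdef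
  have hPQ : 1/P + 1/Q = 1 := by
    rw [hPdef, hQdef, one_div, one_div, ← ENNReal.ofReal_inv_of_pos hp0,
      ← ENNReal.ofReal_inv_of_pos hq0, ← ENNReal.ofReal_add (by positivity) (by positivity)]
    rw [show p⁻¹ + q⁻¹ = 1 by rw [← one_div, ← one_div]; exact hpq]
    simp
  set A : ℝ → ℝ := fun t => (1 / (2 * Real.pi)) * ∫ τ in Set.Ioo 0 (2 * Real.pi), g (e t * f τ)
    with hA
  set G : ℕ → ℝ → ℝ := fun n t => g (e t * f (n * t)) with hG
  have hGc : ∀ n, Continuous (G n) := fun n =>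
    hg.comp ((he.continuous.mul (hfc.comp (continuous_const.mul continuous_id))))
  obtain ⟨M, hM⟩ := hbdd
  set M' : ℝ := max M 0 with hM'def
  have hM'0 : 0 ≤ M' := le_max_right _ _
  have hM' : ∀ n, eLpNorm (G n) P volume ≤ ENNReal.ofReal M' :=
    fun n => (hM n).trans (ENNReal.ofReal_le_ofReal (le_max_left _ _))
  have hGmem : ∀ n, MemLp (G n) P volume := fun n =>
    ⟨(hGc n).aestronglyMeasurable, lt_of_le_of_lt (hM' n) ENNReal.ofReal_lt_top⟩
  set CA : ℝ := (eLpNorm A P volume).toReal with hCA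
  have hCA0 : 0 ≤ CA := ENNReal.toReal_nonneg
  have hAne : eLpNorm A P volume ≠ ⊤ := havg.eLpNorm_lt_top.ne
  rw [Metric.tendsto_atTop]
  intro ε hε
  set ε₁ : ℝ := ε / (4 * (M' + CA + 1)) with hε₁def
  have hε₁ : 0 < ε₁ := by positivity
  obtain ⟨h₀, h₀supp, h₀close, h₀cont, h₀mem⟩ :=
    hmemh.exists_hasCompactSupport_eLpNorm_sub_le (by simp [hQdef] : Q ≠ ∞)
      (ε := ENNReal.ofReal ε₁) (by simp [ENNReal.ofReal_eq_zero]; linarith)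
  have hdiffmem : MemLp (fun t => h t - h₀ t) Q volume := hmemh.sub h₀mem
  have hdiffnorm : eLpNorm (fun t => h t - h₀ t) Q volume ≤ ENNReal.ofReal ε₁ := h₀close
  -- Hölder bounds
  have hterm1 : ∀ n, |(∫ t, G n t * h t) - ∫ t, G n t * h₀ t| ≤ M' * ε₁ := by
    intro n
    obtain ⟨hint1, _⟩ := holder_abs P Q hPQ (G n) h (hGmem n) hmemh
    obtain ⟨hint2, _⟩ := holder_abs P Q hPQ (G n) h₀ (hGmem n) h₀mem
    obtain ⟨hint3, hb3⟩ := holder_abs P Q hPQ (G n) (fun t => h t - h₀ t) (hGmem n) hdiffmem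
    have e1 : (∫ t, G n t * (h t - h₀ t)) = (∫ t, G n t * h t) - ∫ t, G n t * h₀ t := by
      rw [← integral_sub hint1 hint2]
      congr 1; ext t; ring
    rw [← e1]
    refine hb3.trans ?_
    calc (eLpNorm (G n) P volume * eLpNorm (fun t => h t - h₀ t) Q volume).toReal
        ≤ (ENNReal.ofReal M' * ENNReal.ofReal ε₁).toReal := by
          apply ENNReal.toReal_mono
          · exact (ENNReal.mul_lt_top ENNReal.ofReal_lt_top ENNReal.ofReal_lt_top).ne
          · exact mul_le_mul' (hM' n) hdiffnorm
      _ = M' * ε₁ := by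
          rw [← ENNReal.ofReal_mul hM'0, ENNReal.toReal_ofReal (by positivity)]
  have hterm3 : |(∫ t, A t * h₀ t) - ∫ t, A t * h t| ≤ CA * ε₁ := by
    obtain ⟨hint1, _⟩ := holder_abs P Q hPQ A h havg hmemh
    obtain ⟨hint2, _⟩ := holder_abs P Q hPQ A h₀ havg h₀mem
    obtain ⟨hint3, hb3⟩ := holder_abs P Q hPQ A (fun t => h t - h₀ t) havg hdiffmem
    have e1 : (∫ t, A t * (h t - h₀ t)) = (∫ t, A t * h t) - ∫ t, A t * h₀ t := by
      rw [← integral_sub hint1 hint2]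
      congr 1; ext t; ring
    rw [abs_sub_comm, ← e1]
    refine hb3.trans ?_
    calc (eLpNorm A P volume * eLpNorm (fun t => h t - h₀ t) Q volume).toReal
        ≤ (eLpNorm A P volume * ENNReal.ofReal ε₁).toReal := by
          apply ENNReal.toReal_mono
          · exact (ENNReal.mul_lt_top havg.eLpNorm_lt_top ENNReal.ofReal_lt_top).ne
          · exact mul_le_mul' le_rfl hdiffnorm
      _ = CA * ε₁ := by
          rw [ENNReal.toReal_mul, ENNReal.toReal_ofReal (by positivity), hCA]
  -- the middle term via the two-scale averaging lemma
  obtain ⟨r, hr⟩ := h₀supp.isBounded.subset_closedBall 0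
  set R : ℝ := |r| + 1 with hRdef
  have hR : 0 < R := by positivity
  have h₀zero : ∀ x : ℝ, x ∉ Set.Ioc (-R) R → h₀ x = 0 := by
    intro x hx
    apply image_eq_zero_of_notMem_tsupport
    intro hmem
    have := hr hmem
    rw [Metric.mem_closedBall, Real.dist_eq, sub_zero] at this
    have hxr : |x| ≤ |r| := this.trans (le_abs_self r)
    have hxR : |x| < R := by rw [hRdef]; linarith
    rw [abs_lt] at hxR
    exact hx ⟨hxR.1, hxR.2.le⟩
  set K : ℝ → ℝ → ℝ := fun t s => g (e t * f s) * h₀ t with hK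
  have hKu : Continuous (Function.uncurry K) := by
    exact ((hg.comp ((he.continuous.comp continuous_fst).mul
      (hfc.comp continuous_snd))).mul (h₀cont.comp continuous_fst))
  have hKper : ∀ t, Function.Periodic (K t) (2 * Real.pi) := by
    intro t s
    simp only [hK, hper s]
  have hfper : Function.Periodic f (2 * Real.pi) := hper
  have eq1 : ∀ n : ℕ, (∫ t, G n t * h₀ t) = ∫ t in (-R)..R, K t (n * t) := by
    intro n
    rw [intervalIntegral.integral_of_le (by linarith)]
    exact (setIntegral_eq_integral_of_forall_compl_eq_zero
      (fun x hx => by simp [hK, h₀zero x hx])).symm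
  have hptwise : ∀ t : ℝ, (2 * Real.pi)⁻¹ * (∫ τ in (0:ℝ)..(2 * Real.pi), K t τ)
      = A t * h₀ t := by
    intro t
    have : (∫ τ in (0:ℝ)..(2 * Real.pi), K t τ)
        = (∫ τ in (0:ℝ)..(2 * Real.pi), g (e t * f τ)) * h₀ t := by
      simp only [hK]
      exact intervalIntegral.integral_mul_const _ _
    rw [this, intervalIntegral.integral_of_le hπ.le, integral_Ioc_eq_integral_Ioo]
    simp only [hA, one_div]
    ring
  have eq2 : (∫ t, A t * h₀ t)
      = ∫ t in (-R)..R, (2 * Real.pi)⁻¹ * ∫ τ in (0:ℝ)..(2 * Real.pi), K t τ := by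
    have : (∫ t in (-R)..R, (2 * Real.pi)⁻¹ * ∫ τ in (0:ℝ)..(2 * Real.pi), K t τ)
        = ∫ t in (-R)..R, A t * h₀ t := by
      apply intervalIntegral.integral_congr
      intro t _
      exact hptwise t
    rw [this, intervalIntegral.integral_of_le (by linarith)]
    exact (setIntegral_eq_integral_of_forall_compl_eq_zero
      (fun x hx => by simp [h₀zero x hx])).symm
  have hmid : Tendsto (fun n : ℕ => ∫ t, G n t * h₀ t) atTop (𝓝 (∫ t, A t * h₀ t)) := by
    rw [eq2]
    exact (avg2 R hR K hKu hKper).congr (fun n => (eq1 n).symm)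
  rw [Metric.tendsto_atTop] at hmid
  obtain ⟨N, hN⟩ := hmid (ε / 4) (by positivity)
  refine ⟨N, fun n hn => ?_⟩
  have hmidn := hN n hn
  rw [Real.dist_eq] at hmidn ⊢
  have hε₁mul : ε₁ * (4 * (M' + CA + 1)) = ε := by
    rw [hε₁def]; field_simp
  have hb1 : M' * ε₁ ≤ ε / 4 := by nlinarith
  have hb3 : CA * ε₁ ≤ ε / 4 := by nlinarith
  have t1 := hterm1 n
  calc |(∫ t, G n t * h t) - ∫ t, A t * h t|
      ≤ |(∫ t, G n t * h t) - ∫ t, G n t * h₀ t|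
        + |(∫ t, G n t * h₀ t) - ∫ t, A t * h₀ t|
        + |(∫ t, A t * h₀ t) - ∫ t, A t * h t| := by
          linarith [abs_sub_le (∫ t, G n t * h t) (∫ t, G n t * h₀ t) (∫ t, A t * h t),
            abs_sub_le (∫ t, G n t * h₀ t) (∫ t, A t * h₀ t) (∫ t, A t * h t)]
    _ < ε := by linarith
end

section
/- Let c > 0 and let e : ℝ → ℝ³ be smooth and bounded. For ω ∈ ℝ define V^ω(t,x) = c/|x − e(t) sin(ωt)| and ⟨V⟩(t,x) = (1/2π)∫_0^{2π} c/|x − e(t) sin(τ)| dτ. Then V^ω converges to ⟨V⟩ in the sense of distributions as |ω| → ∞: for every φ ∈ C_c^∞(ℝ × ℝ³; ℝ), ∫_ℝ ∫_{ℝ³} V^ω(t,x) φ(t,x) dx dt → ∫_ℝ ∫_{ℝ³} ⟨V⟩(t,x) φ(t,x) dx dt as |ω| → ∞. -/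
open MeasureTheory Filter Topology intervalIntegral

open Set Metric

local notation "E3" => EuclideanSpace ℝ (Fin 3)

lemma sin_lip (x y : ℝ) : |Real.sin x - Real.sin y| ≤ |x - y| := by
  rw [Real.sin_sub_sin]
  have h1 : |Real.sin ((x - y) / 2)| ≤ |(x - y) / 2| := Real.abs_sin_le_abs
  have h2 : |Real.cos ((x + y) / 2)| ≤ 1 := Real.abs_cos_le_one _
  rw [abs_mul, abs_mul, abs_two]
  have h3 : |(x - y) / 2| = |x - y| / 2 := by rw [abs_div]; norm_num
  rw [h3] at h1
  nlinarith [abs_nonneg (Real.sin ((x - y) / 2)), abs_nonneg (x - y),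
    abs_nonneg (Real.cos ((x + y) / 2))]

lemma coord_abs_le_norm (y : E3) (i : Fin 3) : |y i| ≤ ‖y‖ := by
  rw [EuclideanSpace.norm_eq]
  have h1 : |y i| = Real.sqrt ((y i) ^ 2) := (Real.sqrt_sq_eq_abs _).symm
  rw [h1]
  apply Real.sqrt_le_sqrt
  have := Finset.single_le_sum (f := fun j => ‖y j‖ ^ 2)
    (fun j _ => by positivity) (Finset.mem_univ i)
  simpa [Real.norm_eq_abs, sq_abs] using this

lemma hyperplane_null (i : Fin 3) : volume {y : E3 | y i = 0} = 0 := by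
  have : {y : E3 | y i = 0} = (LinearMap.ker ((EuclideanSpace.proj i :
      E3 →L[ℝ] ℝ) : E3 →ₗ[ℝ] ℝ) : Set E3) := by
    ext y
    simp [LinearMap.mem_ker]
  rw [this]
  apply Measure.addHaar_submodule
  intro h
  have h1 : (EuclideanSpace.single i (1:ℝ)) ∈ LinearMap.ker ((EuclideanSpace.proj i :
      E3 →L[ℝ] ℝ) : E3 →ₗ[ℝ] ℝ) := h ▸ Submodule.mem_top
  rw [LinearMap.mem_ker] at h1
  simp [EuclideanSpace.proj, PiLp.proj_apply, EuclideanSpace.single_apply] at h1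

lemma oneD_int (r : ℝ) :
    IntegrableOn (fun s : ℝ => (Real.sqrt |s|)⁻¹) (Icc (-r) r) volume := by
  rcases le_or_gt r 0 with hr | hr
  · have h0 : volume (Icc (-r) r) = 0 := by
      rw [Real.volume_Icc, ENNReal.ofReal_eq_zero]
      linarith
    rw [IntegrableOn, Measure.restrict_eq_zero.mpr h0]
    exact integrable_zero_measure
  · have hbase : IntervalIntegrable (fun s : ℝ => (Real.sqrt |s|)⁻¹) volume 0 r := by
      rw [intervalIntegrable_iff_integrableOn_Ioc_of_le hr.le]
      have h1 : IntegrableOn (fun s : ℝ => s ^ (-(1/2) : ℝ)) (Ioc 0 r) volume :=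
        (intervalIntegral.intervalIntegrable_rpow' (by norm_num)).1
      apply h1.congr_fun ?_ measurableSet_Ioc
      intro s hs
      have hs0 : (0:ℝ) < s := hs.1
      show s ^ (-(1/2) : ℝ) = (Real.sqrt |s|)⁻¹
      rw [abs_of_pos hs0, Real.sqrt_eq_rpow, ← Real.rpow_neg hs0.le]
    have hneg : IntervalIntegrable (fun s : ℝ => (Real.sqrt |s|)⁻¹) volume (-r) 0 := by
      have h2 := (IntervalIntegrable.iff_comp_neg).mp hbase
      have h3 : (fun x : ℝ => (Real.sqrt |(-x)|)⁻¹) = (fun s : ℝ => (Real.sqrt |s|)⁻¹) := by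
        funext x; rw [abs_neg]
      rw [h3] at h2
      simpa using h2.symm
    have htot := hneg.trans hbase
    rw [intervalIntegrable_iff_integrableOn_Ioc_of_le (by linarith)] at htot
    exact htot.congr_set_ae Ioc_ae_eq_Icc.symm

lemma inv_norm_int (r : ℝ) :
    IntegrableOn (fun y : E3 => ‖y‖⁻¹) (Metric.closedBall 0 r) volume := by
  set r' := |r| with hr'
  set g1 : ℝ → ℝ := (Icc (-r') r').indicator (fun s => (Real.sqrt |s|)⁻¹) with hg1
  set g2 : ℝ → ℝ := (Icc (-r') r').indicator (fun _ => (1:ℝ)) with hg2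
  set gi : Fin 3 → ℝ → ℝ := fun i => if (i : ℕ) < 2 then g1 else g2 with hgi
  have hg1i : Integrable g1 volume := by
    rw [hg1, integrable_indicator_iff measurableSet_Icc]; exact oneD_int r'
  have hg2i : Integrable g2 volume := by
    rw [hg2, integrable_indicator_iff measurableSet_Icc]
    exact integrableOn_const (by rw [Real.volume_Icc]; exact ENNReal.ofReal_ne_top)
  have hDpi : Integrable (fun x : Fin 3 → ℝ => ∏ i, gi i (x i)) volume := by
    apply Integrable.fintype_prod (f := gi); intro i
    rw [hgi]; dsimp only; split_ifs; exacts [hg1i, hg2i]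
  have hpres := EuclideanSpace.volume_preserving_symm_measurableEquiv_toLp (Fin 3)
  have hD : Integrable (fun y : E3 => ∏ i, gi i (y i)) volume := by
    exact (hpres.integrable_comp_emb
      (MeasurableEquiv.toLp 2 (Fin 3 → ℝ)).symm.measurableEmbedding).2 hDpi
  apply Integrable.mono' (hD.restrict (s := closedBall 0 r))
  · exact (measurable_norm.inv).aestronglyMeasurable
  · have hz : ∀ i : Fin 3, ∀ᵐ (y : E3) ∂(volume.restrict (closedBall 0 r)), y i ≠ 0 := by
      intro i
      apply ae_restrict_of_ae
      rw [ae_iff]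
      simpa [not_not] using hyperplane_null i
    filter_upwards [hz 0, hz 1, ae_restrict_mem measurableSet_closedBall] with y h0 h1 hy
    have hyr : ‖y‖ ≤ r := mem_closedBall_zero_iff.mp hy
    have hcoord : ∀ i : Fin 3, y i ∈ Icc (-r') r' := fun i =>
      abs_le.1 ((coord_abs_le_norm y i).trans (hyr.trans (le_abs_self r)))
    have e0 : gi 0 (y 0) = (Real.sqrt |y 0|)⁻¹ := by
      rw [hgi]; simp only [Fin.val_zero]; norm_num
      rw [hg1, indicator_of_mem (hcoord 0)]
    have e1 : gi 1 (y 1) = (Real.sqrt |y 1|)⁻¹ := by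
      rw [hgi]; simp only [Fin.val_one]; norm_num
      rw [hg1, indicator_of_mem (hcoord 1)]
    have e2 : gi 2 (y 2) = 1 := by
      rw [hgi]; simp only [Fin.val_two]; norm_num
      rw [hg2, indicator_of_mem (hcoord 2)]
    have hs0 : 0 < Real.sqrt |y 0| := Real.sqrt_pos.2 (abs_pos.2 h0)
    have hs1 : 0 < Real.sqrt |y 1| := Real.sqrt_pos.2 (abs_pos.2 h1)
    have key : Real.sqrt |y 0| * Real.sqrt |y 1| ≤ ‖y‖ := by
      rw [← Real.sqrt_mul (abs_nonneg _)]
      have h2 : |y 0| * |y 1| ≤ ‖y‖ ^ 2 := by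
        have := mul_le_mul (coord_abs_le_norm y 0) (coord_abs_le_norm y 1)
          (abs_nonneg _) (norm_nonneg _)
        nlinarith
      calc Real.sqrt (|y 0| * |y 1|) ≤ Real.sqrt (‖y‖ ^ 2) := Real.sqrt_le_sqrt h2
        _ = ‖y‖ := Real.sqrt_sq (norm_nonneg y)
    calc ‖(‖y‖)⁻¹‖ = ‖y‖⁻¹ := Real.norm_of_nonneg (inv_nonneg.2 (norm_nonneg y))
      _ ≤ (Real.sqrt |y 0| * Real.sqrt |y 1|)⁻¹ := by
          apply inv_anti₀ (by positivity) key
      _ = ∏ i, gi i (y i) := by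
          rw [Fin.prod_univ_three, e0, e1, e2, mul_one, mul_inv]



set_option maxHeartbeats 1000000 in
lemma avg_lemma_s9 (f : ℝ → ℝ → ℝ) (T L C : ℝ) (hT : 0 < T) (hC : 0 ≤ C)
    (hper : ∀ t u, f t (u + 2 * Real.pi) = f t u)
    (hbd : ∀ t u, |f t u| ≤ C)
    (hlip : ∀ u u' : ℝ, ∀ t ∈ Icc (-T) T, ∀ t' ∈ Icc (-T) T,
      |f t u - f t' u'| ≤ L * (|t - t'| + |u - u'|)) :
    Tendsto (fun ω : ℝ => ∫ t in (-T)..T, f t (ω * t))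
      (Filter.comap (fun ω : ℝ => |ω|) atTop)
      (𝓝 (∫ t in (-T)..T, (2 * Real.pi)⁻¹ * ∫ u in (0:ℝ)..(2 * Real.pi), f t u)) := by
  have tri : ∀ x y : ℝ, |x - y| ≤ |x| + |y| := fun x y => by
    rw [sub_eq_add_neg]; exact (abs_add_le _ _).trans (by rw [abs_neg])
  have hTmem : T ∈ Icc (-T) T := ⟨by linarith, le_rfl⟩
  have hL : 0 ≤ L := by
    have h1 := (abs_nonneg (f T 0 - f T 1)).trans (hlip 0 1 T hTmem T hTmem)
    simpa using h1
  set g : ℝ → ℝ := fun t => (2*Real.pi)⁻¹ * ∫ u in (0:ℝ)..(2*Real.pi), f t u with hgdef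
  have twopi : (0:ℝ) < 2 * Real.pi := Real.two_pi_pos
  have hfcont : ∀ t ∈ Icc (-T) T, Continuous (f t) := by
    intro t ht
    have : LipschitzWith (Real.toNNReal L) (f t) := by
      apply LipschitzWith.of_dist_le_mul
      intro u u'
      rw [Real.dist_eq, Real.dist_eq, Real.coe_toNNReal L hL]
      calc |f t u - f t u'| ≤ L * (|t - t| + |u - u'|) := hlip u u' t ht t ht
        _ = L * |u - u'| := by rw [sub_self, abs_zero, zero_add]
    exact this.continuous
  have hfte : ∀ t ∈ Icc (-T) T, ∀ a b : ℝ, IntervalIntegrable (f t) volume a b :=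
    fun t ht a b => (hfcont t ht).intervalIntegrable a b
  have hgbd : ∀ t ∈ Icc (-T) T, |g t| ≤ C := by
    intro t ht
    have h1 : ‖∫ u in (0:ℝ)..(2*Real.pi), f t u‖ ≤ C * |2*Real.pi - 0| := by
      apply intervalIntegral.norm_integral_le_of_norm_le_const
      intro u _; rw [Real.norm_eq_abs]; exact hbd t u
    rw [Real.norm_eq_abs, sub_zero, abs_of_pos twopi] at h1
    have h2 : |g t| = (2*Real.pi)⁻¹ * |∫ u in (0:ℝ)..(2*Real.pi), f t u| := by
      rw [hgdef]; dsimp only; rw [abs_mul, abs_of_pos (inv_pos.2 twopi)]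
    rw [h2]
    have h3 : (2*Real.pi)⁻¹ * (C * (2*Real.pi)) = C := by field_simp
    calc (2*Real.pi)⁻¹ * |∫ u in (0:ℝ)..(2*Real.pi), f t u|
        ≤ (2*Real.pi)⁻¹ * (C * (2*Real.pi)) := by
          apply mul_le_mul_of_nonneg_left h1 (by positivity)
      _ = C := h3
  have hglip : ∀ t ∈ Icc (-T) T, ∀ t' ∈ Icc (-T) T, |g t - g t'| ≤ L * |t - t'| := by
    intro t ht t' ht'
    have hsub : (∫ u in (0:ℝ)..(2*Real.pi), f t u) - ∫ u in (0:ℝ)..(2*Real.pi), f t' u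
        = ∫ u in (0:ℝ)..(2*Real.pi), (f t u - f t' u) :=
      (intervalIntegral.integral_sub (hfte t ht 0 _) (hfte t' ht' 0 _)).symm
    have h1 : ‖∫ u in (0:ℝ)..(2*Real.pi), (f t u - f t' u)‖ ≤ (L * |t - t'|) * |2*Real.pi - 0| := by
      apply intervalIntegral.norm_integral_le_of_norm_le_const
      intro u _
      rw [Real.norm_eq_abs]
      calc |f t u - f t' u| ≤ L * (|t - t'| + |u - u|) := hlip u u t ht t' ht'
        _ = L * |t - t'| := by rw [sub_self, abs_zero, add_zero]
    rw [Real.norm_eq_abs, sub_zero, abs_of_pos twopi] at h1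
    have h2 : g t - g t' = (2*Real.pi)⁻¹ * ((∫ u in (0:ℝ)..(2*Real.pi), f t u)
        - ∫ u in (0:ℝ)..(2*Real.pi), f t' u) := by rw [hgdef]; ring
    rw [h2, hsub, abs_mul, abs_of_pos (inv_pos.2 twopi)]
    calc (2*Real.pi)⁻¹ * |∫ u in (0:ℝ)..(2*Real.pi), (f t u - f t' u)|
        ≤ (2*Real.pi)⁻¹ * ((L * |t - t'|) * (2*Real.pi)) := by
          apply mul_le_mul_of_nonneg_left h1 (by positivity)
      _ = L * |t - t'| := by field_simp
  have hgcont : ContinuousOn g (Icc (-T) T) := by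
    apply LipschitzOnWith.continuousOn (K := Real.toNNReal L)
    rw [lipschitzOnWith_iff_dist_le_mul]
    intro x hx y hy
    rw [Real.dist_eq, Real.dist_eq, Real.coe_toNNReal L hL]
    exact hglip x hx y hy
  have hjcont : ∀ ω : ℝ, ContinuousOn (fun t => f t (ω * t)) (Icc (-T) T) := by
    intro ω
    apply LipschitzOnWith.continuousOn (K := Real.toNNReal (L * (1 + |ω|)))
    rw [lipschitzOnWith_iff_dist_le_mul]
    intro x hx y hy
    rw [Real.dist_eq, Real.dist_eq, Real.coe_toNNReal _ (by positivity)]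
    calc |f x (ω*x) - f y (ω*y)| ≤ L * (|x - y| + |ω*x - ω*y|) := hlip _ _ x hx y hy
      _ = L * (|x - y| + |ω| * |x - y|) := by rw [← mul_sub, abs_mul]
      _ = L * (1 + |ω|) * |x - y| := by ring
  have huIcc : uIcc (-T) T = Icc (-T) T := uIcc_of_le (by linarith)
  have hIωg : ∀ ω : ℝ, IntervalIntegrable (fun t => f t (ω*t)) volume (-T) T :=
    fun ω => ContinuousOn.intervalIntegrable (huIcc ▸ hjcont ω)
  have hIg : IntervalIntegrable g volume (-T) T :=
    ContinuousOn.intervalIntegrable (huIcc ▸ hgcont)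
  rw [Metric.tendsto_nhds]
  intro ε hε
  obtain ⟨N0, hN0⟩ := exists_nat_gt (16 * L * T^2 / ε)
  set N : ℕ := N0 + 1 with hNdef
  have hNpos : 0 < (N:ℝ) := Nat.cast_pos.2 (Nat.succ_pos _)
  have hNgt : 16 * L * T^2 / ε < N := by
    have : (N0:ℝ) < N := by rw [hNdef]; push_cast; linarith
    linarith
  have hhalf1 : 8 * L * T^2 / N < ε / 2 := by
    rw [div_lt_iff₀ hNpos]
    have h1 := (div_lt_iff₀ hε).1 hNgt
    nlinarith
  set R := max (32 * Real.pi * C * N / ε) 1 with hR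
  have hev : ∀ᶠ ω : ℝ in comap (fun ω : ℝ => |ω|) atTop, R ≤ |ω| :=
    tendsto_comap.eventually (eventually_ge_atTop R)
  filter_upwards [hev] with ω hω
  have hω1 : (1:ℝ) ≤ |ω| := le_trans (le_max_right _ _) hω
  have hωpos : (0:ℝ) < |ω| := by linarith
  have hω0 : ω ≠ 0 := by
    intro h; rw [h, abs_zero] at hω1; linarith
  rw [Real.dist_eq]
  have hsplit : (∫ t in (-T)..T, f t (ω*t)) - ∫ t in (-T)..T, g t
      = ∫ t in (-T)..T, (f t (ω*t) - g t) := (intervalIntegral.integral_sub (hIωg ω) hIg).symm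
  rw [hsplit]
  set h := 2 * T / N with hh
  have hhpos : 0 < h := by positivity
  set a : ℕ → ℝ := fun i => -T + i * h with ha
  have ha0 : a 0 = -T := by simp [ha]
  have hNh : (N:ℝ) * h = 2*T := by rw [hh]; field_simp
  have haN : a N = T := by rw [ha]; dsimp only; rw [hNh]; ring
  have hamono : ∀ i : ℕ, a i ≤ a (i+1) := by
    intro i; rw [ha]; dsimp only; push_cast; nlinarith
  have hstep : ∀ i : ℕ, a (i+1) - a i = h := by
    intro i; rw [ha]; dsimp only; push_cast; ring
  have haIcc : ∀ i : ℕ, i ≤ N → a i ∈ Icc (-T) T := by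
    intro i hi
    have hi' : (i:ℝ) ≤ N := Nat.cast_le.2 hi
    have h0 : (0:ℝ) ≤ (i:ℝ) * h := by positivity
    have h1 : (i:ℝ) * h ≤ (N:ℝ) * h := by nlinarith
    constructor
    · rw [ha]; dsimp only; linarith
    · rw [ha]; dsimp only; rw [hNh] at h1; linarith
  have hsubint : ∀ i : ℕ, i < N →
      IntervalIntegrable (fun t => f t (ω*t) - g t) volume (a i) (a (i+1)) := by
    intro i hi
    apply ContinuousOn.intervalIntegrable
    have h1 : uIcc (a i) (a (i+1)) = Icc (a i) (a (i+1)) := uIcc_of_le (hamono i)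
    rw [h1]
    have hsub : Icc (a i) (a (i+1)) ⊆ Icc (-T) T :=
      Icc_subset_Icc (haIcc i hi.le).1 (haIcc (i+1) hi).2
    exact ((hjcont ω).sub hgcont).mono hsub
  have hsum := intervalIntegral.sum_integral_adjacent_intervals hsubint
  rw [ha0, haN] at hsum
  have piece : ∀ i : ℕ, i < N →
      |∫ t in (a i)..(a (i+1)), (f t (ω*t) - g t)| ≤ 2*L*h^2 + 8*Real.pi*C/|ω| := by
    intro i hi
    set p := a i with hp0
    set p' := a (i+1) with hp'0
    have hp : p ∈ Icc (-T) T := haIcc i hi.le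
    have hp' : p' ∈ Icc (-T) T := haIcc (i+1) hi
    have hpp' : p ≤ p' := hamono i
    have hplen : p' - p = h := hstep i
    set q : ℝ → ℝ := fun u => f p u - g p with hq
    have hqcont : Continuous q := (hfcont p hp).sub continuous_const
    have hqint : ∀ A B : ℝ, IntervalIntegrable q volume A B :=
      fun A B => hqcont.intervalIntegrable A B
    set Q : ℝ → ℝ := fun u => ∫ v in (0:ℝ)..u, q v with hQ
    have hmean : ∫ v in (0:ℝ)..(2*Real.pi), q v = 0 := by
      rw [hq]
      rw [intervalIntegral.integral_sub (hfte p hp 0 _) intervalIntegrable_const,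
        intervalIntegral.integral_const, hgdef]
      dsimp only
      rw [sub_zero, smul_eq_mul]
      field_simp
      ring
    have hper' : Function.Periodic q (2*Real.pi) := by
      intro v; rw [hq]; dsimp only; rw [hper p v]
    have hQper : Function.Periodic Q (2*Real.pi) := by
      intro u
      have hadd := intervalIntegral.integral_add_adjacent_intervals (hqint 0 u)
        (hqint u (u + 2*Real.pi))
      have h2 : ∫ v in u..(u + 2*Real.pi), q v = ∫ v in (0:ℝ)..(0 + 2*Real.pi), q v :=
        hper'.intervalIntegral_add_eq u 0
      rw [zero_add] at h2
      rw [hQ]; dsimp only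
      rw [← hadd, h2, hmean, add_zero]
    have hqbd : ∀ v, |q v| ≤ 2 * C := by
      intro v
      rw [hq]; dsimp only
      calc |f p v - g p| ≤ |f p v| + |g p| := tri _ _
        _ ≤ C + C := add_le_add (hbd p v) (hgbd p hp)
        _ = 2*C := by ring
    have hQbd : ∀ u, |Q u| ≤ 4 * Real.pi * C := by
      have base : ∀ u, 0 ≤ u → u ≤ 2*Real.pi → |Q u| ≤ 4*Real.pi*C := by
        intro u h0u hu2
        have h1 : ‖∫ v in (0:ℝ)..u, q v‖ ≤ (2*C) * |u - 0| := by
          apply intervalIntegral.norm_integral_le_of_norm_le_const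
          intro v _; rw [Real.norm_eq_abs]; exact hqbd v
        rw [Real.norm_eq_abs, sub_zero, abs_of_nonneg h0u] at h1
        calc |Q u| ≤ 2*C*u := h1
          _ ≤ 2*C*(2*Real.pi) := by nlinarith
          _ = 4*Real.pi*C := by ring
      intro u
      have h1 : Q (u - (⌊u / (2*Real.pi)⌋ : ℤ) * (2*Real.pi)) = Q u := hQper.sub_int_mul_eq _
      rw [← h1]
      apply base
      · exact Int.sub_floor_div_mul_nonneg u twopi
      · exact (Int.sub_floor_div_mul_lt u twopi).le
    have hqint2 : IntervalIntegrable (fun t => q (ω*t)) volume p p' :=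
      (hqcont.comp (continuous_const.mul continuous_id)).intervalIntegrable p p'
    have hfgint : IntervalIntegrable (fun t => f t (ω*t) - g t) volume p p' := hsubint i hi
    have hdecomp : ∫ t in p..p', (f t (ω*t) - g t)
        = (∫ t in p..p', (f t (ω*t) - g t - q (ω*t))) + ∫ t in p..p', q (ω*t) := by
      rw [← intervalIntegral.integral_add (hfgint.sub hqint2) hqint2]
      congr 1; funext t; ring
    have hterm1 : |∫ t in p..p', (f t (ω*t) - g t - q (ω*t))| ≤ (2*L*h) * h := by
      have h1 : ‖∫ t in p..p', (f t (ω*t) - g t - q (ω*t))‖ ≤ (2*L*h) * |p' - p| := by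
        apply intervalIntegral.norm_integral_le_of_norm_le_const
        intro t ht
        rw [uIoc_of_le hpp'] at ht
        have htIcc : t ∈ Icc (-T) T := ⟨hp.1.trans ht.1.le, ht.2.trans hp'.2⟩
        have htp : |t - p| ≤ h := by
          rw [abs_of_nonneg (by linarith [ht.1.le] : (0:ℝ) ≤ t - p)]
          linarith [ht.2, hplen]
        rw [Real.norm_eq_abs]
        have e1 : f t (ω*t) - g t - q (ω*t) = (f t (ω*t) - f p (ω*t)) - (g t - g p) := by
          rw [hq]; ring
        rw [e1]
        calc |(f t (ω*t) - f p (ω*t)) - (g t - g p)|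
            ≤ |f t (ω*t) - f p (ω*t)| + |g t - g p| := tri _ _
          _ ≤ L * (|t - p| + |ω*t - ω*t|) + L * |t - p| :=
              add_le_add (hlip _ _ t htIcc p hp) (hglip t htIcc p hp)
          _ = 2 * L * |t - p| := by rw [sub_self, abs_zero]; ring
          _ ≤ 2*L*h := by nlinarith
      rw [Real.norm_eq_abs, abs_of_nonneg (by linarith : (0:ℝ) ≤ p' - p), hplen] at h1
      exact h1
    have hterm2 : |∫ t in p..p', q (ω*t)| ≤ 8*Real.pi*C/|ω| := by
      have hsub2 : ∫ t in p..p', q (ω*t) = ω⁻¹ • ∫ u in (ω*p)..(ω*p'), q u :=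
        intervalIntegral.integral_comp_mul_left q hω0
      have hQdiff : ∫ u in (ω*p)..(ω*p'), q u = Q (ω*p') - Q (ω*p) := by
        have hadd := intervalIntegral.integral_add_adjacent_intervals (hqint 0 (ω*p))
          (hqint (ω*p) (ω*p'))
        rw [hQ]; dsimp only; linarith
      have hQQ : |Q (ω*p') - Q (ω*p)| ≤ 8*Real.pi*C := by
        calc |Q (ω*p') - Q (ω*p)| ≤ |Q (ω*p')| + |Q (ω*p)| := tri _ _
          _ ≤ 4*Real.pi*C + 4*Real.pi*C := add_le_add (hQbd _) (hQbd _)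
          _ = 8*Real.pi*C := by ring
      rw [hsub2, hQdiff, smul_eq_mul, abs_mul, abs_inv]
      calc |ω|⁻¹ * |Q (ω*p') - Q (ω*p)| ≤ |ω|⁻¹ * (8*Real.pi*C) := by
            apply mul_le_mul_of_nonneg_left hQQ (by positivity)
        _ = 8*Real.pi*C/|ω| := by rw [mul_comm, div_eq_mul_inv]
    rw [hdecomp]
    calc |(∫ t in p..p', (f t (ω*t) - g t - q (ω*t))) + ∫ t in p..p', q (ω*t)|
        ≤ |∫ t in p..p', (f t (ω*t) - g t - q (ω*t))| + |∫ t in p..p', q (ω*t)| := abs_add_le _ _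
      _ ≤ (2*L*h)*h + 8*Real.pi*C/|ω| := add_le_add hterm1 hterm2
      _ = 2*L*h^2 + 8*Real.pi*C/|ω| := by ring
  have htotal : |∫ t in (-T)..T, (f t (ω*t) - g t)|
      ≤ N * (2*L*h^2) + N * (8*Real.pi*C/|ω|) := by
    rw [← hsum]
    calc |∑ i ∈ Finset.range N, ∫ t in (a i)..(a (i+1)), (f t (ω*t) - g t)|
        ≤ ∑ i ∈ Finset.range N, |∫ t in (a i)..(a (i+1)), (f t (ω*t) - g t)| :=
          Finset.abs_sum_le_sum_abs _ _
      _ ≤ ∑ _i ∈ Finset.range N, (2*L*h^2 + 8*Real.pi*C/|ω|) :=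
          Finset.sum_le_sum (fun i hi => piece i (Finset.mem_range.1 hi))
      _ = N * (2*L*h^2 + 8*Real.pi*C/|ω|) := by
          rw [Finset.sum_const, Finset.card_range, nsmul_eq_mul]
      _ = N * (2*L*h^2) + N * (8*Real.pi*C/|ω|) := by ring
  have hNh2 : (N:ℝ) * (2*L*h^2) = 8*L*T^2/N := by
    rw [hh]; field_simp; ring
  have hfirst : (N:ℝ) * (2*L*h^2) < ε/2 := by rw [hNh2]; exact hhalf1
  have hsecond : (N:ℝ) * (8*Real.pi*C/|ω|) ≤ ε/4 := by
    have hRle : 32*Real.pi*C*N/ε ≤ |ω| := le_trans (le_max_left _ _) hω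
    have h8 : (N:ℝ) * (8*Real.pi*C/|ω|) = 8*Real.pi*C*N/|ω| := by ring
    rw [h8, div_le_iff₀ hωpos]
    have h9 := (div_le_iff₀ hε).1 hRle
    nlinarith [Real.pi_pos]
  calc |∫ t in (-T)..T, (f t (ω*t) - g t)|
      ≤ N * (2*L*h^2) + N * (8*Real.pi*C/|ω|) := htotal
    _ < ε/2 + ε/4 := by linarith
    _ < ε := by linarith

set_option maxHeartbeats 1000000 in
/-- The rapidly oscillating Coulomb potential
`V^ω(t,x) = c/|x − e(t) sin(ωt)|` converges in the sense of distributions, as `|ω| → ∞`,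
to its fast-time average `⟨V⟩(t,x) = (1/2π)∫₀^{2π} c/|x − e(t) sin τ| dτ`. -/
theorem oscillating_coulomb_converges_in_distributions
    (c : ℝ) (hc : 0 < c)
    (e : ℝ → EuclideanSpace ℝ (Fin 3)) (he : ContDiff ℝ (⊤ : ℕ∞) e)
    (hebd : ∃ M : ℝ, ∀ t : ℝ, ‖e t‖ ≤ M) :
    ∀ φ : ℝ × EuclideanSpace ℝ (Fin 3) → ℝ, ContDiff ℝ (⊤ : ℕ∞) φ → HasCompactSupport φ →
      Tendsto
        (fun ω : ℝ => ∫ t : ℝ, ∫ x : EuclideanSpace ℝ (Fin 3),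
          (c / ‖x - Real.sin (ω * t) • e t‖) * φ (t, x))
        (Filter.comap (fun ω : ℝ => |ω|) atTop)
        (𝓝 (∫ t : ℝ, ∫ x : EuclideanSpace ℝ (Fin 3),
          ((1 / (2 * Real.pi)) * ∫ τ in (0:ℝ)..(2 * Real.pi),
            c / ‖x - Real.sin τ • e t‖) * φ (t, x))) := by
  intro φ hφ hφc
  have twopi : (0:ℝ) < 2 * Real.pi := Real.two_pi_pos
  obtain ⟨M0, hM0⟩ := hebd
  set M := max M0 0 with hMdef
  have hM : ∀ t, ‖e t‖ ≤ M := fun t => (hM0 t).trans (le_max_left _ _)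
  have hMnn : (0:ℝ) ≤ M := le_max_right _ _
  -- support bound
  obtain ⟨K0, hK0⟩ := hφc.isBounded.subset_closedBall 0
  set K := max K0 0 with hKdef
  have hKnn : (0:ℝ) ≤ K := le_max_right _ _
  have hK : tsupport φ ⊆ Metric.closedBall 0 K :=
    hK0.trans (closedBall_subset_closedBall (le_max_left _ _))
  have hφt0 : ∀ t (x : E3), K < |t| → φ (t, x) = 0 := by
    intro t x h
    apply image_eq_zero_of_notMem_tsupport
    intro hmem
    have h1 : ‖((t,x) : ℝ × E3)‖ ≤ K := mem_closedBall_zero_iff.1 (hK hmem)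
    have h2 : |t| ≤ K := by
      have := norm_fst_le ((t,x) : ℝ × E3)
      rw [Real.norm_eq_abs] at this
      exact this.trans h1
    linarith
  have hφx0 : ∀ t (x : E3), K < ‖x‖ → φ (t, x) = 0 := by
    intro t x h
    apply image_eq_zero_of_notMem_tsupport
    intro hmem
    have h1 : ‖((t,x) : ℝ × E3)‖ ≤ K := mem_closedBall_zero_iff.1 (hK hmem)
    have h2 : ‖x‖ ≤ K := (norm_snd_le ((t,x) : ℝ × E3)).trans h1
    linarith
  set T := K + 1 with hTdef
  have hTpos : (0:ℝ) < T := by linarith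
  -- constants
  obtain ⟨Cφ, hCφ⟩ := hφc.exists_bound_of_continuous hφ.continuous
  have hCφnn : 0 ≤ Cφ := (norm_nonneg _).trans (hCφ (0,0))
  obtain ⟨Lφ, hLφ⟩ := ContDiff.lipschitzWith_of_hasCompactSupport hφc hφ (by simp)
  -- e is Lipschitz on Icc (-T) T
  have hediff : Differentiable ℝ e := he.differentiable (by simp)
  obtain ⟨Le0, hLe0⟩ := (isCompact_Icc (a := -T) (b := T)).exists_bound_of_continuousOn
    ((he.continuous_fderiv (by simp)).continuousOn)
  set Le := max Le0 0 with hLedef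
  have hLenn : (0:ℝ) ≤ Le := le_max_right _ _
  have helip : ∀ t ∈ Icc (-T) T, ∀ t' ∈ Icc (-T) T, ‖e t - e t'‖ ≤ Le * |t - t'| := by
    intro t ht t' ht'
    have h1 := Convex.norm_image_sub_le_of_norm_fderiv_le (f := e) (C := Le)
      (fun x _ => hediff x)
      (fun x hx => (hLe0 x hx).trans (le_max_left Le0 0)) (convex_Icc (-T) T) ht' ht
    rw [Real.norm_eq_abs] at h1
    exact h1
  set r₀ := K + M + 1 with hr₀def
  -- dominating function
  set D : E3 → ℝ := (Metric.closedBall (0:E3) r₀).indicator (fun y => c * ‖y‖⁻¹) with hD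
  have hDint : Integrable D volume :=
    (integrable_indicator_iff measurableSet_closedBall).2 ((inv_norm_int r₀).const_mul c)
  have hDnn : ∀ y, 0 ≤ D y := by
    intro y; rw [hD]
    apply indicator_nonneg
    intro y' _
    positivity
  set CD := ∫ y, D y with hCDdef
  have hCDnn : 0 ≤ CD := integral_nonneg hDnn
  -- the function G
  set G : ℝ → ℝ → ℝ := fun t s => ∫ x : E3, (c / ‖x - s • e t‖) * φ (t, x) with hG
  -- measurability
  have hmeas : ∀ (t : ℝ) (a : E3),
      AEStronglyMeasurable (fun y : E3 => (c / ‖y‖) * φ (t, y + a)) volume := by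
    intro t a
    apply AEStronglyMeasurable.mul
    · exact (measurable_const.div measurable_norm).aestronglyMeasurable
    · exact (hφ.continuous.comp
        (continuous_const.prodMk (continuous_id.add continuous_const))).aestronglyMeasurable
  -- pointwise domination
  have hdom : ∀ (t : ℝ) (a : E3), ‖a‖ ≤ M → ∀ y : E3,
      ‖(c / ‖y‖) * φ (t, y + a)‖ ≤ D y * Cφ := by
    intro t a ha y
    by_cases hy : y ∈ Metric.closedBall (0:E3) r₀
    · rw [hD, indicator_of_mem hy, norm_mul]
      have h1 : ‖c / ‖y‖‖ = c / ‖y‖ := Real.norm_of_nonneg (by positivity)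
      rw [h1, div_eq_mul_inv]
      exact mul_le_mul_of_nonneg_left (hCφ _) (by positivity)
    · rw [hD, indicator_of_notMem hy, zero_mul]
      have hy' : r₀ < ‖y‖ := by
        rw [mem_closedBall_zero_iff, not_le] at hy
        exact hy
      have hxa : K < ‖y + a‖ := by
        have h3 : ‖y‖ - ‖a‖ ≤ ‖y + a‖ := by
          have := norm_sub_norm_le y (-a)
          simpa [sub_neg_eq_add, norm_neg] using this
        rw [hr₀def] at hy'
        linarith
      rw [hφx0 _ _ hxa, mul_zero, norm_zero]
  -- integrability of shifted integrand
  have hIsh : ∀ (t : ℝ) (a : E3), ‖a‖ ≤ M →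
      Integrable (fun y : E3 => (c / ‖y‖) * φ (t, y + a)) volume := by
    intro t a ha
    exact Integrable.mono' (hDint.mul_const Cφ) (hmeas t a) (ae_of_all _ (hdom t a ha))
  -- shift representation
  have hshift : ∀ (t s : ℝ), G t s = ∫ y : E3, (c / ‖y‖) * φ (t, y + s • e t) := by
    intro t s
    rw [hG]; dsimp only
    rw [← MeasureTheory.integral_add_right_eq_self (μ := volume)
      (fun x : E3 => (c / ‖x - s • e t‖) * φ (t, x)) (s • e t)]
    congr 1; funext y; rw [add_sub_cancel_right]
  have hsmul_bd : ∀ (s : ℝ) (t : ℝ), |s| ≤ 1 → ‖s • e t‖ ≤ M := by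
    intro s t hs
    rw [norm_smul, Real.norm_eq_abs]
    calc |s| * ‖e t‖ ≤ 1 * M :=
      mul_le_mul hs (hM t) (norm_nonneg _) zero_le_one
    _ = M := one_mul M
  -- bound on G
  have hGbd : ∀ (t s : ℝ), |s| ≤ 1 → |G t s| ≤ CD * Cφ := by
    intro t s hs
    rw [hshift]
    have h1 := MeasureTheory.norm_integral_le_of_norm_le (hDint.mul_const Cφ)
      (ae_of_all _ (hdom t _ (hsmul_bd s t hs)))
    rw [Real.norm_eq_abs] at h1
    calc |∫ y : E3, (c / ‖y‖) * φ (t, y + s • e t)| ≤ ∫ y, D y * Cφ := h1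
      _ = CD * Cφ := by rw [MeasureTheory.integral_mul_const]
  -- Lipschitz property of G
  have hGlip : ∀ (s s' : ℝ), |s| ≤ 1 → |s'| ≤ 1 → ∀ t ∈ Icc (-T) T, ∀ t' ∈ Icc (-T) T,
      |G t s - G t' s'| ≤ (CD * (Lφ * (1 + Le + M))) * (|t - t'| + |s - s'|) := by
    intro s s' hs hs' t ht t' ht'
    rw [hshift, hshift]
    rw [← integral_sub (hIsh t _ (hsmul_bd s t hs)) (hIsh t' _ (hsmul_bd s' t' hs'))]
    have hptwise : ∀ y : E3,
        ‖(c / ‖y‖) * φ (t, y + s • e t) - (c / ‖y‖) * φ (t', y + s' • e t')‖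
        ≤ D y * ((Lφ : ℝ) * ((1 + Le) * |t - t'| + M * |s - s'|)) := by
      intro y
      rw [← mul_sub, norm_mul]
      have hcn : ‖c / ‖y‖‖ = c / ‖y‖ := Real.norm_of_nonneg (by positivity)
      rw [hcn]
      by_cases hy : y ∈ Metric.closedBall (0:E3) r₀
      · rw [hD, indicator_of_mem hy]
        have hdist : ‖φ (t, y + s • e t) - φ (t', y + s' • e t')‖
            ≤ (Lφ : ℝ) * ((1 + Le) * |t - t'| + M * |s - s'|) := by
          have h1 := hLφ.dist_le_mul ((t, y + s • e t) : ℝ × E3) ((t', y + s' • e t') : ℝ × E3)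
          rw [Real.dist_eq] at h1
          have h2 : dist ((t, y + s • e t) : ℝ × E3) ((t', y + s' • e t') : ℝ × E3)
              ≤ (1 + Le) * |t - t'| + M * |s - s'| := by
            rw [Prod.dist_eq]
            apply max_le
            · rw [Real.dist_eq]
              nlinarith [abs_nonneg (t - t'), abs_nonneg (s - s')]
            · rw [dist_eq_norm]
              have e3 : (y + s • e t) - (y + s' • e t')
                  = s • (e t - e t') + (s - s') • e t' := by
                rw [smul_sub, sub_smul]; abel
              rw [e3]
              calc ‖s • (e t - e t') + (s - s') • e t'‖
                  ≤ ‖s • (e t - e t')‖ + ‖(s - s') • e t'‖ := norm_add_le _ _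
                _ = |s| * ‖e t - e t'‖ + |s - s'| * ‖e t'‖ := by
                    rw [norm_smul, norm_smul, Real.norm_eq_abs, Real.norm_eq_abs]
                _ ≤ 1 * (Le * |t - t'|) + |s - s'| * M := by
                    apply add_le_add
                    · exact mul_le_mul hs (helip t ht t' ht') (norm_nonneg _) zero_le_one
                    · exact mul_le_mul_of_nonneg_left (hM t') (abs_nonneg _)
                _ = Le * |t - t'| + M * |s - s'| := by ring
                _ ≤ (1 + Le) * |t - t'| + M * |s - s'| := by
                    nlinarith [abs_nonneg (t - t')]
          rw [← Real.norm_eq_abs] at h1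
          calc ‖φ (t, y + s • e t) - φ (t', y + s' • e t')‖
              ≤ (Lφ : ℝ) * dist ((t, y + s • e t) : ℝ × E3) ((t', y + s' • e t') : ℝ × E3) := h1
            _ ≤ (Lφ : ℝ) * ((1 + Le) * |t - t'| + M * |s - s'|) :=
                mul_le_mul_of_nonneg_left h2 (NNReal.coe_nonneg _)
        calc (c / ‖y‖) * ‖φ (t, y + s • e t) - φ (t', y + s' • e t')‖
            ≤ (c / ‖y‖) * ((Lφ : ℝ) * ((1 + Le) * |t - t'| + M * |s - s'|)) :=
              mul_le_mul_of_nonneg_left hdist (by positivity)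
          _ = (c * ‖y‖⁻¹) * ((Lφ : ℝ) * ((1 + Le) * |t - t'| + M * |s - s'|)) := by
              rw [div_eq_mul_inv]
      · rw [hD, indicator_of_notMem hy, zero_mul]
        have hy' : r₀ < ‖y‖ := by
          rw [mem_closedBall_zero_iff, not_le] at hy
          exact hy
        have hz : ∀ (σ : ℝ) (τ : ℝ), |σ| ≤ 1 → φ (τ, y + σ • e τ) = 0 := by
          intro σ τ hσ
          apply hφx0
          have h3 : ‖y‖ - ‖σ • e τ‖ ≤ ‖y + σ • e τ‖ := by
            have := norm_sub_norm_le y (-(σ • e τ))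
            simpa [sub_neg_eq_add, norm_neg] using this
          have h4 := hsmul_bd σ τ hσ
          rw [hr₀def] at hy'
          linarith
        rw [hz s t hs, hz s' t' hs', sub_zero, norm_zero, mul_zero]
    have h1 := MeasureTheory.norm_integral_le_of_norm_le
      (hDint.mul_const ((Lφ : ℝ) * ((1 + Le) * |t - t'| + M * |s - s'|)))
      (ae_of_all _ hptwise)
    rw [Real.norm_eq_abs] at h1
    calc |∫ y : E3, ((c / ‖y‖) * φ (t, y + s • e t) - (c / ‖y‖) * φ (t', y + s' • e t'))|
        ≤ ∫ y, D y * ((Lφ : ℝ) * ((1 + Le) * |t - t'| + M * |s - s'|)) := h1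
      _ = CD * ((Lφ : ℝ) * ((1 + Le) * |t - t'| + M * |s - s'|)) := by rw [MeasureTheory.integral_mul_const]
      _ ≤ (CD * (Lφ * (1 + Le + M))) * (|t - t'| + |s - s'|) := by
          have hA : (0:ℝ) ≤ CD * (Lφ:ℝ) := mul_nonneg hCDnn (NNReal.coe_nonneg _)
          nlinarith [mul_nonneg hA (mul_nonneg hMnn (abs_nonneg (t - t'))),
            mul_nonneg hA (mul_nonneg (by linarith : (0:ℝ) ≤ 1 + Le) (abs_nonneg (s - s')))]
  -- vanishing of G for large |t|
  have hGzero : ∀ t s : ℝ, K < |t| → G t s = 0 := by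
    intro t s ht
    rw [hG]; dsimp only
    have h1 : (fun x : E3 => (c / ‖x - s • e t‖) * φ (t, x)) = fun _ => (0:ℝ) := by
      funext x; rw [hφt0 t x ht, mul_zero]
    rw [h1, MeasureTheory.integral_zero]
  have hnotin : ∀ t : ℝ, t ∉ Ioc (-T) T → K < |t| := by
    intro t ht
    rw [mem_Ioc, not_and_or] at ht
    rcases ht with h1 | h1
    · push_neg at h1
      have h2 : T ≤ -t := by linarith
      have h3 : T ≤ |t| := h2.trans (neg_le_abs t)
      rw [hTdef] at h3; linarith
    · push_neg at h1
      have h3 : T ≤ |t| := h1.le.trans (le_abs_self t)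
      rw [hTdef] at h3; linarith
  -- reduction of a full-line integral to the interval
  have reduce : ∀ (F : ℝ → ℝ), (∀ t, t ∉ Ioc (-T) T → F t = 0) →
      (∫ t, F t) = ∫ t in (-T)..T, F t := by
    intro F hF
    rw [intervalIntegral.integral_of_le (by linarith : -T ≤ T),
      ← MeasureTheory.integral_indicator measurableSet_Ioc]
    congr 1
    funext t
    by_cases ht : t ∈ Ioc (-T) T
    · rw [indicator_of_mem ht]
    · rw [indicator_of_notMem ht, hF t ht]
  have habs1 : ∀ u : ℝ, |Real.sin u| ≤ 1 :=
    fun u => abs_le.2 ⟨Real.neg_one_le_sin u, Real.sin_le_one u⟩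
  -- LHS identification
  have hLHSeq : ∀ ω : ℝ, (∫ t : ℝ, ∫ x : E3, (c / ‖x - Real.sin (ω * t) • e t‖) * φ (t, x))
      = ∫ t in (-T)..T, G t (Real.sin (ω * t)) := by
    intro ω
    calc (∫ t : ℝ, ∫ x : E3, (c / ‖x - Real.sin (ω * t) • e t‖) * φ (t, x))
        = ∫ t : ℝ, G t (Real.sin (ω * t)) := rfl
      _ = ∫ t in (-T)..T, G t (Real.sin (ω * t)) :=
          reduce _ (fun t ht => hGzero t _ (hnotin t ht))
  -- Fubini swap for fixed t
  have hswap : ∀ t : ℝ,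
      (∫ x : E3, ∫ τ in (0:ℝ)..(2*Real.pi), (c/‖x - Real.sin τ • e t‖) * φ (t, x))
      = ∫ τ in (0:ℝ)..(2*Real.pi), G t (Real.sin τ) := by
    intro t
    have e1 : ∀ x : E3, (∫ τ in (0:ℝ)..(2*Real.pi), (c/‖x - Real.sin τ • e t‖) * φ (t, x))
        = ∫ τ in Ioc (0:ℝ) (2*Real.pi), (c/‖x - Real.sin τ • e t‖) * φ (t, x) :=
      fun x => intervalIntegral.integral_of_le twopi.le
    rw [intervalIntegral.integral_of_le twopi.le]
    simp_rw [e1]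
    have hmeas2 : AEStronglyMeasurable
        (Function.uncurry fun (τ : ℝ) (x : E3) => (c/‖x - Real.sin τ • e t‖) * φ (t, x))
        ((volume.restrict (Ioc (0:ℝ) (2*Real.pi))).prod volume) := by
      apply Measurable.aestronglyMeasurable
      have hc1 : Continuous fun p : ℝ × E3 => ‖p.2 - Real.sin p.1 • e t‖ :=
        (continuous_snd.sub ((Real.continuous_sin.comp continuous_fst).smul
          continuous_const)).norm
      exact (measurable_const.div hc1.measurable).mul
        ((hφ.continuous.comp (continuous_const.prodMk continuous_snd)).measurable)
    have hint : Integrable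
        (Function.uncurry fun (τ : ℝ) (x : E3) => (c/‖x - Real.sin τ • e t‖) * φ (t, x))
        ((volume.restrict (Ioc (0:ℝ) (2*Real.pi))).prod volume) := by
      rw [MeasureTheory.integrable_prod_iff hmeas2]
      constructor
      · apply ae_of_all
        intro τ
        have h2 := (hIsh t _ (hsmul_bd (Real.sin τ) t (habs1 τ))).comp_sub_right
          (Real.sin τ • e t)
        simp only [sub_add_cancel] at h2
        simp only [Function.uncurry_apply_pair]
        exact h2
      · apply Integrable.mono' (g := fun _ : ℝ => CD * Cφ)
        · exact integrableOn_const measure_Ioc_lt_top.ne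
        · exact hmeas2.norm.integral_prod_right'
        · apply ae_of_all
          intro τ
          simp only [Function.uncurry_apply_pair]
          have hsm : ‖Real.sin τ • e t‖ ≤ M := hsmul_bd _ t (habs1 τ)
          have h2 : (∫ x : E3, ‖(c/‖x - Real.sin τ • e t‖) * φ (t, x)‖)
              = ∫ y : E3, ‖(c/‖y‖) * φ (t, y + Real.sin τ • e t)‖ := by
            rw [← MeasureTheory.integral_add_right_eq_self (μ := volume)
              (fun x : E3 => ‖(c/‖x - Real.sin τ • e t‖) * φ (t, x)‖) (Real.sin τ • e t)]
            congr 1; funext y; rw [add_sub_cancel_right]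
          have h4 : (∫ y : E3, ‖(c/‖y‖) * φ (t, y + Real.sin τ • e t)‖) ≤ ∫ y, D y * Cφ :=
            integral_mono_of_nonneg (ae_of_all _ fun y => norm_nonneg _)
              (hDint.mul_const Cφ) (ae_of_all _ (hdom t _ hsm))
          rw [Real.norm_eq_abs, abs_of_nonneg (integral_nonneg (fun x => norm_nonneg _))]
          calc (∫ x : E3, ‖(c/‖x - Real.sin τ • e t‖) * φ (t, x)‖)
              ≤ ∫ y, D y * Cφ := h2 ▸ h4
            _ = CD * Cφ := by rw [MeasureTheory.integral_mul_const]
    calc (∫ x : E3, ∫ τ in Ioc (0:ℝ) (2*Real.pi), (c/‖x - Real.sin τ • e t‖) * φ (t, x))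
        = ∫ τ in Ioc (0:ℝ) (2*Real.pi), ∫ x : E3, (c/‖x - Real.sin τ • e t‖) * φ (t, x) :=
          (MeasureTheory.integral_integral_swap hint).symm
      _ = ∫ τ in Ioc (0:ℝ) (2*Real.pi), G t (Real.sin τ) := rfl
  -- inner integral identification for the limit
  have hHt : ∀ t : ℝ, (∫ x : E3, ((1/(2*Real.pi)) * ∫ τ in (0:ℝ)..(2*Real.pi),
        c/‖x - Real.sin τ • e t‖) * φ (t, x))
      = (2*Real.pi)⁻¹ * ∫ u in (0:ℝ)..(2*Real.pi), G t (Real.sin u) := by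
    intro t
    have e2 : ∀ x : E3, ((1/(2*Real.pi)) * ∫ τ in (0:ℝ)..(2*Real.pi),
          c/‖x - Real.sin τ • e t‖) * φ (t, x)
        = (2*Real.pi)⁻¹ * ∫ τ in (0:ℝ)..(2*Real.pi), (c/‖x - Real.sin τ • e t‖) * φ (t, x) := by
      intro x
      rw [intervalIntegral.integral_mul_const, one_div]
      ring
    simp_rw [e2]
    rw [MeasureTheory.integral_const_mul, hswap t]
  -- RHS identification
  have hRHSeq : (∫ t : ℝ, ∫ x : E3, ((1/(2*Real.pi)) * ∫ τ in (0:ℝ)..(2*Real.pi),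
        c/‖x - Real.sin τ • e t‖) * φ (t, x))
      = ∫ t in (-T)..T, (2*Real.pi)⁻¹ * ∫ u in (0:ℝ)..(2*Real.pi), G t (Real.sin u) := by
    have h1 : (fun t : ℝ => ∫ x : E3, ((1/(2*Real.pi)) * ∫ τ in (0:ℝ)..(2*Real.pi),
          c/‖x - Real.sin τ • e t‖) * φ (t, x))
        = fun t => (2*Real.pi)⁻¹ * ∫ u in (0:ℝ)..(2*Real.pi), G t (Real.sin u) := funext hHt
    rw [h1]
    apply reduce
    intro t ht
    have h3 : (∫ u in (0:ℝ)..(2*Real.pi), G t (Real.sin u)) = 0 := by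
      rw [intervalIntegral.integral_congr (g := fun _ => (0:ℝ))
        (fun u _ => hGzero t _ (hnotin t ht))]
      simp
    rw [h3, mul_zero]
  -- apply the averaging lemma
  have main := avg_lemma_s9 (fun t u => G t (Real.sin u)) T (CD * (Lφ * (1 + Le + M))) (CD * Cφ)
    hTpos (mul_nonneg hCDnn hCφnn)
    (fun t u => by show G t (Real.sin (u + 2*Real.pi)) = G t (Real.sin u); rw [Real.sin_add_two_pi])
    (fun t u => hGbd t _ (habs1 u))
    (by
      intro u u' t ht t' ht'
      have h1 := hGlip (Real.sin u) (Real.sin u') (habs1 u) (habs1 u') t ht t' ht'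
      have hL0 : (0:ℝ) ≤ CD * (Lφ * (1 + Le + M)) :=
        mul_nonneg hCDnn (mul_nonneg (NNReal.coe_nonneg _) (by linarith))
      calc |G t (Real.sin u) - G t' (Real.sin u')|
          ≤ (CD * (Lφ * (1 + Le + M))) * (|t - t'| + |Real.sin u - Real.sin u'|) := h1
        _ ≤ (CD * (Lφ * (1 + Le + M))) * (|t - t'| + |u - u'|) := by
            apply mul_le_mul_of_nonneg_left _ hL0
            exact add_le_add_right (sin_lip u u') _)
  rw [hRHSeq]
  exact main.congr (fun ω => (hLHSeq ω).symm)
end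

section
/- Let ζ ∈ C^∞(ℝ³; ℝ) be such that ζ and all its iterated derivatives are bounded on ℝ³, let e : ℝ → ℝ³ be smooth, and let 0 < T < ∞. Then sup over (t,x) ∈ [0,T] × ℝ³ of | ∫_0^t ( ζ(x − e(t') sin(ω t')) − (1/2π) ∫_{−π}^{π} ζ(x − e(t') sin(τ)) dτ ) dt' | tends to 0 as |ω| → ∞. -/
open MeasureTheory Filter Topology intervalIntegral

lemma osc_primitive_bound {f : ℝ → ℝ} (hf : Continuous f) {P M : ℝ} (hP : 0 < P)
    (hper : Function.Periodic f P) (hzero : (∫ s in (0:ℝ)..P, f s) = 0)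
    (hM : ∀ s, |f s| ≤ M) (a b : ℝ) :
    |∫ s in a..b, f s| ≤ 2 * (P * M) := by
  set F : ℝ → ℝ := fun s => ∫ σ in (0:ℝ)..s, f σ with hFdef
  have hint : ∀ u v : ℝ, IntervalIntegrable f volume u v := fun u v =>
    hf.intervalIntegrable u v
  have hFper : Function.Periodic F P := by
    intro s
    have h1 : (∫ σ in s..(s + P), f σ) = ∫ σ in (0:ℝ)..(0 + P), f σ :=
      hper.intervalIntegral_add_eq s 0
    have h2 : F s + ∫ σ in s..(s + P), f σ = F (s + P) :=
      intervalIntegral.integral_add_adjacent_intervals (hint 0 s) (hint s (s + P))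
    simp only [zero_add] at h1
    rw [h1, hzero, add_zero] at h2
    exact h2.symm
  have hFbd : ∀ s, |F s| ≤ P * M := by
    intro s
    obtain ⟨y, hy, hFy⟩ := hFper.exists_mem_Ico₀ hP s
    rw [hFy]
    have : ‖∫ σ in (0:ℝ)..y, f σ‖ ≤ M * |y - 0| :=
      intervalIntegral.norm_integral_le_of_norm_le_const fun σ _ => by
        simpa [Real.norm_eq_abs] using hM σ
    rw [Real.norm_eq_abs] at this
    refine this.trans ?_
    have hy0 : 0 ≤ y := hy.1
    have hyP : y ≤ P := hy.2.le
    have hM0 : 0 ≤ M := (abs_nonneg _).trans (hM 0)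
    rw [sub_zero, abs_of_nonneg hy0]
    calc M * y ≤ M * P := by nlinarith
      _ = P * M := mul_comm _ _
  have hab : (∫ s in a..b, f s) = F b - F a :=
    (intervalIntegral.integral_interval_sub_left (hint 0 b) (hint 0 a)).symm
  rw [hab]
  calc |F b - F a| ≤ |F b| + |F a| := abs_sub _ _
    _ ≤ P * M + P * M := add_le_add (hFbd b) (hFbd a)
    _ = 2 * (P * M) := by ring

lemma period_average_integral {g : ℝ → ℝ} (hper : Function.Periodic g (2 * Real.pi))
    {ω : ℝ} (hω : ω ≠ 0) :
    (∫ s in (0:ℝ)..(2 * Real.pi / |ω|), g (ω * s)) =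
      |ω|⁻¹ * ∫ τ in (-Real.pi)..Real.pi, g τ := by
  have h1 : (∫ s in (0:ℝ)..(2 * Real.pi / |ω|), g (ω * s)) =
      ω⁻¹ • ∫ τ in (ω * 0)..(ω * (2 * Real.pi / |ω|)), g τ :=
    intervalIntegral.integral_comp_mul_left g hω
  rcases hω.lt_or_gt with hneg | hpos
  · have habs : |ω| = -ω := abs_of_neg hneg
    have h2 : ω * (2 * Real.pi / |ω|) = -(2 * Real.pi) := by
      rw [habs, mul_div_assoc', mul_comm, mul_div_assoc, div_neg, div_self hω]; ring
    have h3 : (∫ τ in (-(2 * Real.pi))..(-(2 * Real.pi) + 2 * Real.pi), g τ)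
        = ∫ τ in (-Real.pi)..(-Real.pi + 2 * Real.pi), g τ :=
      hper.intervalIntegral_add_eq _ _
    have e1 : -(2 * Real.pi) + 2 * Real.pi = 0 := by ring
    have e2 : -Real.pi + 2 * Real.pi = Real.pi := by ring
    rw [e1, e2] at h3
    rw [h1, mul_zero, h2, intervalIntegral.integral_symm, h3, smul_eq_mul, habs]
    ring
  · have habs : |ω| = ω := abs_of_pos hpos
    have h2 : ω * (2 * Real.pi / |ω|) = 2 * Real.pi := by
      rw [habs]; field_simp
    have h3 : (∫ τ in (0:ℝ)..(0 + 2 * Real.pi), g τ)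
        = ∫ τ in (-Real.pi)..(-Real.pi + 2 * Real.pi), g τ :=
      hper.intervalIntegral_add_eq _ _
    have e2 : -Real.pi + 2 * Real.pi = Real.pi := by ring
    rw [zero_add, e2] at h3
    rw [h1, mul_zero, h2, h3, smul_eq_mul, habs]

set_option maxHeartbeats 1000000 in
/-- uniform-in-`(t,x)` averaging lemma: for `ζ` smooth with all derivatives
bounded and `e` smooth, the supremum over `(t,x) ∈ [0,T] × ℝ³` of
`|∫₀^t (ζ(x − e(t')sin(ωt')) − (1/2π)∫_{−π}^{π} ζ(x − e(t')sin τ) dτ) dt'|`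
tends to `0` as `|ω| → ∞`. -/
theorem averaging_uniform_convergence
    (ζ : EuclideanSpace ℝ (Fin 3) → ℝ) (hζ : ContDiff ℝ (⊤ : ℕ∞) ζ)
    (hζbd : ∀ n : ℕ, ∃ M : ℝ, ∀ x : EuclideanSpace ℝ (Fin 3), ‖iteratedFDeriv ℝ n ζ x‖ ≤ M)
    (e : ℝ → EuclideanSpace ℝ (Fin 3)) (he : ContDiff ℝ (⊤ : ℕ∞) e)
    (T : ℝ) (hT : 0 < T) :
    ∀ ε : ℝ, 0 < ε → ∀ᶠ ω : ℝ in Filter.comap (fun ω : ℝ => |ω|) atTop,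
      ∀ t ∈ Set.Icc (0:ℝ) T, ∀ x : EuclideanSpace ℝ (Fin 3),
        |∫ t' in (0:ℝ)..t,
            (ζ (x - Real.sin (ω * t') • e t') -
              (1 / (2 * Real.pi)) * ∫ τ in (-Real.pi)..Real.pi,
                ζ (x - Real.sin τ • e t'))| ≤ ε := by
  have hπ := Real.pi_pos
  -- bound on ζ
  obtain ⟨M₀', hM₀'⟩ := hζbd 0
  set M₀ : ℝ := max M₀' 0 with hM₀def
  have hM₀ : ∀ y, |ζ y| ≤ M₀ := fun y => by
    have := hM₀' y
    rw [norm_iteratedFDeriv_zero, Real.norm_eq_abs] at this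
    exact this.trans (le_max_left _ _)
  have hM₀0 : 0 ≤ M₀ := le_max_right _ _
  -- Lipschitz bound on ζ
  obtain ⟨M₁', hM₁'⟩ := hζbd 1
  set M₁ : ℝ := max M₁' 0 with hM₁def
  have hM₁0 : 0 ≤ M₁ := le_max_right _ _
  have hζdiff : Differentiable ℝ ζ := hζ.differentiable (by simp)
  have hfd : ∀ y, ‖fderiv ℝ ζ y‖ ≤ M₁ := fun y => by
    refine ContinuousLinearMap.opNorm_le_bound _ hM₁0 fun v => ?_
    have h1 : fderiv ℝ ζ y v = iteratedFDeriv ℝ 1 ζ y (fun _ => v) := by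
      rw [iteratedFDeriv_one_apply]
    rw [h1]
    calc ‖iteratedFDeriv ℝ 1 ζ y (fun _ => v)‖
        ≤ ‖iteratedFDeriv ℝ 1 ζ y‖ * ∏ _i : Fin 1, ‖v‖ :=
          (iteratedFDeriv ℝ 1 ζ y).le_opNorm _
      _ ≤ M₁ * ‖v‖ := by
          simp only [Finset.prod_const, Finset.card_univ, Fintype.card_fin, pow_one]
          exact mul_le_mul_of_nonneg_right ((hM₁' y).trans (le_max_left _ _)) (norm_nonneg v)
  have hlip : ∀ a b : EuclideanSpace ℝ (Fin 3), |ζ a - ζ b| ≤ M₁ * ‖a - b‖ := fun a b => by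
    have := convex_univ.norm_image_sub_le_of_norm_fderiv_le
      (fun y _ => hζdiff y) (fun y _ => hfd y) (Set.mem_univ b) (Set.mem_univ a)
    simpa [Real.norm_eq_abs] using this
  -- Lipschitz bound on e over [0,T]
  have hecont : Continuous e := he.continuous
  obtain ⟨K', hK'⟩ := (isCompact_Icc : IsCompact (Set.Icc (0:ℝ) T)).exists_bound_of_continuousOn
      ((he.continuous_deriv (by simp)).continuousOn)
  set K : ℝ := max K' 0 with hKdef
  have hK0 : 0 ≤ K := le_max_right _ _
  have helip : ∀ u v, u ∈ Set.Icc (0:ℝ) T → v ∈ Set.Icc (0:ℝ) T →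
      ‖e u - e v‖ ≤ K * |u - v| := by
    intro u v hu hv
    have := (convex_Icc (0:ℝ) T).norm_image_sub_le_of_norm_deriv_le (C := K)
      (fun y _ => (he.differentiable (by simp)).differentiableAt)
      (fun y hy => (hK' y hy).trans (le_max_left _ _)) hv hu
    simpa [Real.norm_eq_abs] using this
  intro ε hε
  -- choose number of subintervals
  set A : ℝ := 2 * M₁ * K * T ^ 2 with hAdef
  have hA0 : 0 ≤ A := by positivity
  set n : ℕ := ⌈2 * A / ε⌉₊ + 1 with hndef
  have hnpos : 0 < (n:ℝ) := by positivity
  have hnA : A / n ≤ ε / 2 := by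
    have h1 : 2 * A / ε ≤ (n : ℝ) := by
      calc 2 * A / ε ≤ (⌈2 * A / ε⌉₊ : ℝ) := Nat.le_ceil _
        _ ≤ (n : ℝ) := by rw [hndef]; push_cast; linarith
    have h2 : 2 * A ≤ (n:ℝ) * ε := by
      rw [div_le_iff₀ hε] at h1; linarith
    rw [div_le_div_iff₀ hnpos two_pos]
    linarith
  -- threshold for |ω|
  set R : ℝ := max 1 (16 * Real.pi * M₀ * n / ε) with hRdef
  have hev : ∀ᶠ ω : ℝ in Filter.comap (fun ω : ℝ => |ω|) atTop, R ≤ |ω| := by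
    apply eventually_comap.2
    filter_upwards [eventually_ge_atTop R] with b hb ω hω
    rw [hω]; exact hb
  filter_upwards [hev] with ω hωR
  intro t ht x
  obtain ⟨ht0, htT⟩ := ht
  have hω1 : (1:ℝ) ≤ |ω| := (le_max_left _ _).trans hωR
  have hωpos : (0:ℝ) < |ω| := lt_of_lt_of_le one_pos hω1
  have hω0 : ω ≠ 0 := fun h => by rw [h, abs_zero] at hω1; linarith
  -- notation
  set g : ℝ → ℝ → ℝ := fun u σ => ζ (x - Real.sin σ • e u) with hgdef
  set c : ℝ → ℝ := fun u => (1 / (2 * Real.pi)) * ∫ τ in (-Real.pi)..Real.pi, g u τ with hcdef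
  set p : ℝ → ℝ := fun t' => g t' (ω * t') - c t' with hpdef
  have hEq : (∫ t' in (0:ℝ)..t,
      (ζ (x - Real.sin (ω * t') • e t') -
        (1 / (2 * Real.pi)) * ∫ τ in (-Real.pi)..Real.pi, ζ (x - Real.sin τ • e t')))
      = ∫ t' in (0:ℝ)..t, p t' :=
    intervalIntegral.integral_congr (fun t' _ => by simp only [hpdef, hgdef, hcdef])
  rw [hEq]
  -- continuity
  have hgcont : Continuous (Function.uncurry g) := by
    show Continuous fun q : ℝ × ℝ => ζ (x - Real.sin q.2 • e q.1)
    apply hζ.continuous.comp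
    exact continuous_const.sub
      ((Real.continuous_sin.comp continuous_snd).smul (hecont.comp continuous_fst))
  have hgcont' : Continuous fun q : ℝ × ℝ => g q.1 q.2 := hgcont
  have hgu : ∀ u, Continuous (g u) := fun u =>
    hζ.continuous.comp (continuous_const.sub (Real.continuous_sin.smul continuous_const))
  have hccont : Continuous c := by
    apply continuous_const.mul
    exact intervalIntegral.continuous_parametric_intervalIntegral_of_continuous' hgcont _ _
  have hpcont : Continuous p := by
    have h1 : Continuous fun t' : ℝ => g t' (ω * t') := by
      show Continuous fun t' : ℝ => ζ (x - Real.sin (ω * t') • e t')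
      exact hζ.continuous.comp (continuous_const.sub
        ((Real.continuous_sin.comp (continuous_const.mul continuous_id)).smul hecont))
    rw [hpdef]
    exact h1.sub hccont
  -- bounds
  have hgbd : ∀ u σ, |g u σ| ≤ M₀ := fun u σ => hM₀ _
  have hcbd : ∀ u, |c u| ≤ M₀ := by
    intro u
    have h1 : |∫ τ in (-Real.pi)..Real.pi, g u τ| ≤ M₀ * |Real.pi - -Real.pi| := by
      have := intervalIntegral.norm_integral_le_of_norm_le_const
        (C := M₀) (a := -Real.pi) (b := Real.pi) (f := g u)
        (fun σ _ => by simpa [Real.norm_eq_abs] using hgbd u σ)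
      simpa [Real.norm_eq_abs] using this
    have h2 : |Real.pi - -Real.pi| = 2 * Real.pi := by
      rw [abs_of_nonneg (by linarith)]; ring
    rw [h2] at h1
    have h3 : |c u| = (1 / (2 * Real.pi)) * |∫ τ in (-Real.pi)..Real.pi, g u τ| := by
      rw [hcdef]
      simp only [abs_mul]
      congr 1
      rw [abs_of_pos (by positivity)]
    rw [h3]
    calc (1 / (2 * Real.pi)) * |∫ τ in (-Real.pi)..Real.pi, g u τ|
        ≤ (1 / (2 * Real.pi)) * (M₀ * (2 * Real.pi)) := by
          apply mul_le_mul_of_nonneg_left h1 (by positivity)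
      _ = M₀ := by field_simp
  -- Lipschitz in the slow variable
  have hglip : ∀ u v, u ∈ Set.Icc (0:ℝ) T → v ∈ Set.Icc (0:ℝ) T → ∀ σ,
      |g u σ - g v σ| ≤ M₁ * (K * |u - v|) := by
    intro u v hu hv σ
    have h1 : (x - Real.sin σ • e u) - (x - Real.sin σ • e v) = Real.sin σ • (e v - e u) := by
      rw [smul_sub]; abel
    calc |g u σ - g v σ| ≤ M₁ * ‖(x - Real.sin σ • e u) - (x - Real.sin σ • e v)‖ :=
          hlip _ _
      _ = M₁ * (|Real.sin σ| * ‖e v - e u‖) := by rw [h1, norm_smul, Real.norm_eq_abs]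
      _ ≤ M₁ * (1 * ‖e v - e u‖) := by
          apply mul_le_mul_of_nonneg_left _ hM₁0
          exact mul_le_mul_of_nonneg_right (Real.abs_sin_le_one σ) (norm_nonneg _)
      _ = M₁ * ‖e v - e u‖ := by ring
      _ ≤ M₁ * (K * |v - u|) :=
          mul_le_mul_of_nonneg_left (helip v u hv hu) hM₁0
      _ = M₁ * (K * |u - v|) := by rw [abs_sub_comm]
  have hclip : ∀ u v, u ∈ Set.Icc (0:ℝ) T → v ∈ Set.Icc (0:ℝ) T →
      |c u - c v| ≤ M₁ * (K * |u - v|) := by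
    intro u v hu hv
    have hint1 : IntervalIntegrable (g u) volume (-Real.pi) Real.pi :=
      (hgu u).intervalIntegrable _ _
    have hint2 : IntervalIntegrable (g v) volume (-Real.pi) Real.pi :=
      (hgu v).intervalIntegrable _ _
    have hdiff : c u - c v
        = (1 / (2 * Real.pi)) * ∫ τ in (-Real.pi)..Real.pi, (g u τ - g v τ) := by
      rw [hcdef, intervalIntegral.integral_sub hint1 hint2]; ring
    have h1 : |∫ τ in (-Real.pi)..Real.pi, (g u τ - g v τ)|
        ≤ (M₁ * (K * |u - v|)) * |Real.pi - -Real.pi| := by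
      have := intervalIntegral.norm_integral_le_of_norm_le_const
        (C := M₁ * (K * |u - v|)) (a := -Real.pi) (b := Real.pi)
        (f := fun τ => g u τ - g v τ)
        (fun σ _ => by simpa [Real.norm_eq_abs] using hglip u v hu hv σ)
      simpa [Real.norm_eq_abs] using this
    have h2 : |Real.pi - -Real.pi| = 2 * Real.pi := by
      rw [abs_of_nonneg (by linarith)]; ring
    rw [h2] at h1
    rw [hdiff, abs_mul, abs_of_pos (show (0:ℝ) < 1 / (2*Real.pi) by positivity)]
    calc (1 / (2 * Real.pi)) * |∫ τ in (-Real.pi)..Real.pi, (g u τ - g v τ)|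
        ≤ (1 / (2 * Real.pi)) * ((M₁ * (K * |u - v|)) * (2 * Real.pi)) := by
          apply mul_le_mul_of_nonneg_left h1 (by positivity)
      _ = M₁ * (K * |u - v|) := by field_simp
  -- the partition
  set a : ℕ → ℝ := fun k => (k : ℝ) * (t / n) with hadef
  have ha0 : a 0 = 0 := by simp [hadef]
  have han : a n = t := by
    rw [hadef]
    field_simp
  have hstep : ∀ k : ℕ, a (k + 1) - a k = t / n := by
    intro k; rw [hadef]; push_cast; ring
  have htn0 : 0 ≤ t / n := by positivity
  have hmono : ∀ k : ℕ, a k ≤ a (k + 1) := fun k => by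
    have := hstep k; linarith
  have hrange : ∀ k : ℕ, k ≤ n → a k ∈ Set.Icc (0:ℝ) t := by
    intro k hk
    constructor
    · rw [hadef]; positivity
    · rw [hadef]
      calc (k:ℝ) * (t / n) ≤ (n:ℝ) * (t / n) := by
            apply mul_le_mul_of_nonneg_right _ htn0
            exact_mod_cast hk
        _ = t := by field_simp
  -- per-piece bound
  set B : ℝ := 2 * (M₁ * (K * (t / n))) * (t / n) + 2 * (2 * Real.pi / |ω| * (2 * M₀))
    with hBdef
  have hpiece : ∀ k : ℕ, k < n → |∫ t' in (a k)..(a (k + 1)), p t'| ≤ B := by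
    intro k hk
    set u := a k with hudef
    have hu_mem : u ∈ Set.Icc (0:ℝ) T :=
      ⟨(hrange k hk.le).1, (hrange k hk.le).2.trans htT⟩
    have hu1_mem : a (k+1) ∈ Set.Icc (0:ℝ) t := hrange (k+1) hk
    set fk : ℝ → ℝ := fun t' => g u (ω * t') - c u with hfkdef
    have hfkcont : Continuous fk := by
      apply Continuous.sub _ continuous_const
      exact (hgu u).comp (continuous_const.mul continuous_id)
    have hsplit : (∫ t' in (a k)..(a (k + 1)), p t')
        = (∫ t' in (a k)..(a (k + 1)), (p t' - fk t'))
          + ∫ t' in (a k)..(a (k + 1)), fk t' := by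
      rw [← intervalIntegral.integral_add (f := fun t' => p t' - fk t')
        ((hpcont.sub hfkcont).intervalIntegrable _ _)
        (hfkcont.intervalIntegrable _ _)]
      simp
    -- first bound
    have hbound1 : |∫ t' in (a k)..(a (k + 1)), (p t' - fk t')|
        ≤ 2 * (M₁ * (K * (t / n))) * (t / n) := by
      have key : ∀ t' ∈ Set.uIoc (a k) (a (k+1)),
          ‖p t' - fk t'‖ ≤ 2 * (M₁ * (K * (t / n))) := by
        intro t' ht'
        rw [Set.uIoc_of_le (hmono k)] at ht'
        have ht'mem : t' ∈ Set.Icc (0:ℝ) T :=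
          ⟨hu_mem.1.trans ht'.1.le, ht'.2.trans (hu1_mem.2.trans htT)⟩
        have hdist : |t' - u| ≤ t / n := by
          rw [abs_of_nonneg (by linarith [ht'.1])]
          have := hstep k; linarith [ht'.2]
        have e1 : p t' - fk t' = (g t' (ω * t') - g u (ω * t')) - (c t' - c u) := by
          rw [hpdef, hfkdef]; ring
        rw [Real.norm_eq_abs, e1]
        have b1 : |g t' (ω * t') - g u (ω * t')| ≤ M₁ * (K * (t / n)) := by
          refine (hglip t' u ht'mem hu_mem _).trans ?_
          apply mul_le_mul_of_nonneg_left _ hM₁0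
          exact mul_le_mul_of_nonneg_left hdist hK0
        have b2 : |c t' - c u| ≤ M₁ * (K * (t / n)) := by
          refine (hclip t' u ht'mem hu_mem).trans ?_
          apply mul_le_mul_of_nonneg_left _ hM₁0
          exact mul_le_mul_of_nonneg_left hdist hK0
        calc |(g t' (ω * t') - g u (ω * t')) - (c t' - c u)|
            ≤ |g t' (ω * t') - g u (ω * t')| + |c t' - c u| := abs_sub _ _
          _ ≤ 2 * (M₁ * (K * (t / n))) := by linarith
      have := intervalIntegral.norm_integral_le_of_norm_le_const key
      rw [Real.norm_eq_abs] at this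
      refine this.trans ?_
      have : |a (k+1) - a k| = t / n := by rw [hstep k, abs_of_nonneg htn0]
      rw [this]
    -- second bound : oscillation
    have hguper : Function.Periodic (g u) (2 * Real.pi) := by
      intro σ
      simp only [hgdef, Real.sin_add_two_pi]
    have hfkper : Function.Periodic fk (2 * Real.pi / |ω|) := by
      intro s
      have hsin : Real.sin (ω * (s + 2 * Real.pi / |ω|)) = Real.sin (ω * s) := by
        rcases hω0.lt_or_gt with hneg | hpos
        · have habs : |ω| = -ω := abs_of_neg hneg
          have hinv : ω * (2 * Real.pi / |ω|) = -(2 * Real.pi) := by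
            rw [habs, mul_div_assoc', mul_comm, mul_div_assoc, div_neg, div_self hω0]
            ring
          have harg : ω * (s + 2 * Real.pi / |ω|) = ω * s - 2 * Real.pi := by
            rw [mul_add, hinv]
            ring
          rw [harg, Real.sin_sub_two_pi]
        · have habs : |ω| = ω := abs_of_pos hpos
          have hinv : ω * (2 * Real.pi / |ω|) = 2 * Real.pi := by
            rw [habs, mul_div_assoc', mul_comm, mul_div_assoc, div_self hω0]
            ring
          have harg : ω * (s + 2 * Real.pi / |ω|) = ω * s + 2 * Real.pi := by
            rw [mul_add, hinv]
          rw [harg, Real.sin_add_two_pi]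
      simp only [hfkdef, hgdef, hsin]
    have hfkzero : (∫ s in (0:ℝ)..(2 * Real.pi / |ω|), fk s) = 0 := by
      have hint1 : IntervalIntegrable (fun s => g u (ω * s)) volume 0 (2 * Real.pi / |ω|) :=
        (((hgu u).comp (continuous_const.mul continuous_id)).intervalIntegrable _ _)
      rw [hfkdef]
      simp only
      rw [intervalIntegral.integral_sub hint1 (intervalIntegrable_const)]
      rw [period_average_integral hguper hω0, intervalIntegral.integral_const]
      rw [hcdef]
      simp only [smul_eq_mul, sub_zero]
      have hπ0 : Real.pi ≠ 0 := ne_of_gt hπ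
      have hωne : |ω| ≠ 0 := ne_of_gt hωpos
      field_simp
      ring
    have hfkbd : ∀ s, |fk s| ≤ 2 * M₀ := by
      intro s
      calc |fk s| ≤ |g u (ω * s)| + |c u| := abs_sub _ _
        _ ≤ 2 * M₀ := by linarith [hgbd u (ω * s), hcbd u]
    have hbound2 : |∫ t' in (a k)..(a (k + 1)), fk t'|
        ≤ 2 * (2 * Real.pi / |ω| * (2 * M₀)) :=
      osc_primitive_bound hfkcont (by positivity) hfkper hfkzero hfkbd _ _
    rw [hsplit, hBdef]
    calc |(∫ t' in (a k)..(a (k + 1)), (p t' - fk t'))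
          + ∫ t' in (a k)..(a (k + 1)), fk t'|
        ≤ |∫ t' in (a k)..(a (k + 1)), (p t' - fk t')|
          + |∫ t' in (a k)..(a (k + 1)), fk t'| := abs_add_le _ _
      _ ≤ 2 * (M₁ * (K * (t / n))) * (t / n) + 2 * (2 * Real.pi / |ω| * (2 * M₀)) := by
          exact add_le_add hbound1 hbound2
  -- assemble
  have hsum : (∫ t' in (0:ℝ)..t, p t')
      = ∑ k ∈ Finset.range n, ∫ t' in (a k)..(a (k + 1)), p t' := by
    rw [intervalIntegral.sum_integral_adjacent_intervals
      (fun k _ => hpcont.intervalIntegrable _ _), ha0, han]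
  rw [hsum]
  have habs : |∑ k ∈ Finset.range n, ∫ t' in (a k)..(a (k + 1)), p t'|
      ≤ ∑ k ∈ Finset.range n, |∫ t' in (a k)..(a (k + 1)), p t'| :=
    Finset.abs_sum_le_sum_abs _ _
  have hsum2 : ∑ k ∈ Finset.range n, |∫ t' in (a k)..(a (k + 1)), p t'| ≤ n * B := by
    have := Finset.sum_le_card_nsmul (Finset.range n) _ B
      (fun k hk => hpiece k (Finset.mem_range.mp hk))
    rwa [Finset.card_range, nsmul_eq_mul] at this
  refine habs.trans (hsum2.trans ?_)
  -- final arithmetic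
  have hfirst : (n:ℝ) * (2 * (M₁ * (K * (t / n))) * (t / n)) ≤ ε / 2 := by
    have e1 : (n:ℝ) * (2 * (M₁ * (K * (t / n))) * (t / n)) = 2 * M₁ * K * t^2 / n := by
      field_simp
    rw [e1]
    refine le_trans ?_ hnA
    gcongr
    rw [hAdef]
    have ht2 : t ^ 2 ≤ T ^ 2 := by nlinarith
    have hmul := mul_le_mul_of_nonneg_left ht2 (by positivity : (0:ℝ) ≤ 2 * M₁ * K)
    linarith
  have hsecond : (n:ℝ) * (2 * (2 * Real.pi / |ω| * (2 * M₀))) ≤ ε / 2 := by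
    have hRle : 16 * Real.pi * M₀ * n / ε ≤ |ω| := (le_max_right _ _).trans hωR
    have h1 : 16 * Real.pi * M₀ * n ≤ ε * |ω| := by
      rw [div_le_iff₀ hε] at hRle; linarith
    have e1 : (n:ℝ) * (2 * (2 * Real.pi / |ω| * (2 * M₀)))
        = 8 * Real.pi * M₀ * n / |ω| := by field_simp; ring
    rw [e1, div_le_iff₀ hωpos]
    nlinarith
  calc (n:ℝ) * B = (n:ℝ) * (2 * (M₁ * (K * (t / n))) * (t / n))
        + (n:ℝ) * (2 * (2 * Real.pi / |ω| * (2 * M₀))) := by rw [hBdef]; ring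
    _ ≤ ε / 2 + ε / 2 := add_le_add hfirst hsecond
    _ = ε := by ring
end
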